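/- arXiv:2106.12205 — 7 statements merged into one kernel-verified Lean document; each statement's English description precedes it below -/
import Mathlib

section
/- Let G be a cubic graph with a 3-array of perfect matchings M = {M_1, M_2, M_3}. Then every vertex of the core of M has degree 0, 2, or 3 in the core; in particular every component of the core is either an even circuit or a subdivision of a cubic graph. -/
open SimpleGraph Finset

/-- `M` is (the edge set of) a perfect matching of `G`: a set of edges of `G` such that
every vertex lies on exactly one edge of `M`. -/
def IsPerfectMatchingSet {V : Type*} (G : SimpleGraph V) (M : Finset (Sym2 V)) : Prop :=
  (↑M : Set (Sym2 V)) ⊆ G.edgeSet ∧ ∀ v : V, ∃! e, e ∈ M ∧ v ∈ e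

/-- The number of matchings among `M₁, M₂, M₃` containing the edge `e`. -/
def covCount {V : Type*} [DecidableEq V] (M₁ M₂ M₃ : Finset (Sym2 V)) (e : Sym2 V) : ℕ :=
  (if e ∈ M₁ then 1 else 0) + (if e ∈ M₂ then 1 else 0) + (if e ∈ M₃ then 1 else 0)

/-!
At every vertex the counts `covCount` of the three incident edges sum to `3`, one for each
perfect matching. If exactly one of them differed from `1`, it would be `3 - 1 - 1 = 1` after
all, so no vertex has core degree `1`. At a vertex of core degree `2` the two core edges have
counts summing to `2`, neither equal to `1`, so one count is `0` and the other `2`. Along a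
cycle through such vertices the property "count `0`" therefore alternates from edge to edge,
which forces the cycle to have even length.
-/

namespace SimpleGraph.Walk

variable {V : Type*} {H : SimpleGraph V} {u : V}

theorem IsCycle.even_length_of_alternating {p : H.Walk u u} (hp : p.IsCycle)
    (P : Sym2 V → Prop)
    (hP : ∀ x ∈ p.support, ∀ y z, H.Adj x y → H.Adj x z → y ≠ z →
      (P s(x, y) ↔ ¬ P s(x, z))) :
    Even p.length := by
  set e : ℕ → Sym2 V := fun i ↦ s(p.getVert i, p.getVert (i + 1))
  have hlen := hp.three_le_length
  have hadj : ∀ i < p.length, H.Adj (p.getVert i) (p.getVert (i + 1)) :=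
    fun i hi ↦ p.adj_getVert_succ hi
  have halt : ∀ i, i + 1 < p.length → (P (e (i + 1)) ↔ ¬ P (e i)) := by
    intro i hi
    have hne := hp.getVert_sub_one_ne_getVert_add_one (i := i + 1) (by omega)
    simpa [e, Sym2.eq_swap] using hP _ (p.getVert_mem_support (i + 1)) _ _
      (hadj (i + 1) hi) (hadj i (by omega)).symm hne.symm
  have hparity : ∀ i < p.length, (P (e i) ↔ (P (e 0) ↔ Even i)) := by
    intro i hi
    induction i with
    | zero => simp
    | succ i ih =>
      rw [halt i hi, ih (by omega), Nat.even_add_one]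
      tauto
  have hends : P (e (p.length - 1)) ↔ ¬ P (e 0) := by
    have h := hP u p.start_mem_support _ _ (p.adj_penultimate hp.not_nil).symm
      (p.adj_snd hp.not_nil) hp.snd_ne_penultimate.symm
    simpa [e, Nat.sub_add_cancel (by omega : 1 ≤ p.length), Sym2.eq_swap] using h
  have hodd : ¬ Even (p.length - 1) := by
    have := hparity (p.length - 1) (by omega)
    tauto
  simpa [Nat.even_sub (by omega : 1 ≤ p.length)] using hodd

end SimpleGraph.Walk

theorem Finset.sum_filter_ne_one_add_card {α : Type*} (s : Finset α) (f : α → ℕ) :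
    ∑ a ∈ s with f a ≠ 1, f a + #s = ∑ a ∈ s, f a + #{a ∈ s | f a ≠ 1} := by
  have hones : ∑ a ∈ s with ¬ f a ≠ 1, f a = #{a ∈ s | ¬ f a ≠ 1} := by
    rw [card_eq_sum_ones]
    exact sum_congr rfl fun a ha ↦ by simpa using (mem_filter.1 ha).2
  rw [← sum_filter_add_sum_filter_not s (f · ≠ 1), hones,
    ← card_filter_add_card_filter_not (s := s) (f · ≠ 1)]
  ring

section Core

variable {V : Type*} [DecidableEq V] {G : SimpleGraph V}

theorem IsPerfectMatchingSet.card_filter_neighborFinset_mem {M : Finset (Sym2 V)}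
    (hM : IsPerfectMatchingSet G M) (x : V) [Fintype (G.neighborSet x)] :
    #{y ∈ G.neighborFinset x | s(x, y) ∈ M} = 1 := by
  obtain ⟨e, ⟨heM, hxe⟩, huniq⟩ := hM.2 x
  obtain ⟨y₀, rfl⟩ := Sym2.mem_iff_exists.1 hxe
  rw [card_eq_one]
  refine ⟨y₀, ext fun y ↦ ?_⟩
  simp only [mem_filter, mem_neighborFinset, mem_singleton]
  refine ⟨fun ⟨_, hy⟩ ↦ Sym2.congr_right.1 (huniq s(x, y) ⟨hy, Sym2.mem_mk_left x y⟩), ?_⟩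
  rintro rfl
  exact ⟨G.mem_edgeSet.1 (hM.1 heM), heM⟩

variable {M₁ M₂ M₃ : Finset (Sym2 V)}

theorem sum_covCount_neighborFinset (h₁ : IsPerfectMatchingSet G M₁)
    (h₂ : IsPerfectMatchingSet G M₂) (h₃ : IsPerfectMatchingSet G M₃)
    (x : V) [Fintype (G.neighborSet x)] :
    ∑ y ∈ G.neighborFinset x, covCount M₁ M₂ M₃ s(x, y) = 3 := by
  simp only [covCount, sum_add_distrib, sum_boole, h₁.card_filter_neighborFinset_mem,
    h₂.card_filter_neighborFinset_mem, h₃.card_filter_neighborFinset_mem]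
  norm_num

variable {coreG : SimpleGraph V}
  (hcore : ∀ u v : V, coreG.Adj u v ↔ G.Adj u v ∧ covCount M₁ M₂ M₃ s(u, v) ≠ 1)
include hcore

theorem neighborFinset_eq_filter_covCount_ne_one (x : V) [Fintype (G.neighborSet x)]
    [Fintype (coreG.neighborSet x)] :
    coreG.neighborFinset x = {y ∈ G.neighborFinset x | covCount M₁ M₂ M₃ s(x, y) ≠ 1} := by
  ext y
  simp [hcore]

variable (h₁ : IsPerfectMatchingSet G M₁) (h₂ : IsPerfectMatchingSet G M₂)
  (h₃ : IsPerfectMatchingSet G M₃)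
include h₁ h₂ h₃

theorem sum_covCount_core_neighborFinset {x : V} [Fintype (G.neighborSet x)]
    [Fintype (coreG.neighborSet x)] (hx : G.degree x = 3) :
    ∑ y ∈ coreG.neighborFinset x, covCount M₁ M₂ M₃ s(x, y) = coreG.degree x := by
  have hcount := sum_filter_ne_one_add_card (G.neighborFinset x)
    (fun y ↦ covCount M₁ M₂ M₃ s(x, y))
  rw [sum_covCount_neighborFinset h₁ h₂ h₃, card_neighborFinset_eq_degree, hx,
    ← neighborFinset_eq_filter_covCount_ne_one hcore, card_neighborFinset_eq_degree] at hcount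
  omega

theorem core_degree_eq_zero_or_two_or_three {x : V} [Fintype (G.neighborSet x)]
    [Fintype (coreG.neighborSet x)] (hx : G.degree x = 3) :
    coreG.degree x = 0 ∨ coreG.degree x = 2 ∨ coreG.degree x = 3 := by
  have hle : coreG.degree x ≤ 3 := by
    rw [← hx, ← card_neighborFinset_eq_degree, ← card_neighborFinset_eq_degree,
      neighborFinset_eq_filter_covCount_ne_one hcore]
    exact card_filter_le _ _
  suffices coreG.degree x ≠ 1 by omega
  intro h1
  obtain ⟨y, hy⟩ := card_eq_one.1 ((card_neighborFinset_eq_degree coreG x).trans h1)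
  have hsum := sum_covCount_core_neighborFinset hcore h₁ h₂ h₃ hx
  rw [hy, sum_singleton, h1] at hsum
  have hxy : coreG.Adj x y := by simp [← mem_neighborFinset, hy]
  exact ((hcore x y).1 hxy).2 hsum

theorem covCount_eq_zero_iff_of_core_degree_eq_two {x y z : V} [Fintype (G.neighborSet x)]
    [Fintype (coreG.neighborSet x)] (hx : G.degree x = 3) (hx₂ : coreG.degree x = 2)
    (hy : coreG.Adj x y) (hz : coreG.Adj x z) (hyz : y ≠ z) :
    covCount M₁ M₂ M₃ s(x, y) = 0 ↔ covCount M₁ M₂ M₃ s(x, z) ≠ 0 := by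
  have hpair : coreG.neighborFinset x = {y, z} :=
    (eq_of_subset_of_card_le (by simp [insert_subset_iff, hy, hz])
      (by rw [card_neighborFinset_eq_degree, hx₂, card_pair hyz])).symm
  have hsum := sum_covCount_core_neighborFinset hcore h₁ h₂ h₃ hx
  rw [hpair, sum_pair hyz, hx₂] at hsum
  have := ((hcore x y).1 hy).2
  have := ((hcore x z).1 hz).2
  omega

end Core

/-- Let `coreG` be the core of a 3-array `{M₁, M₂, M₃}` of perfect matchings of a cubic
graph `G`, i.e. the subgraph induced by the edges lying in 0, 2 or 3 of the matchings.
Then every vertex has degree 0, 2 or 3 in the core; in particular every component of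
the core is an even circuit or a subdivision of a cubic graph (circuit components of
the core, i.e. cycles through vertices of core-degree 2, have even length). -/
theorem core_degrees_and_even_circuits
    {V : Type*} [Fintype V] [DecidableEq V]
    (G : SimpleGraph V) [DecidableRel G.Adj]
    (hcubic : ∀ v : V, G.degree v = 3)
    (M₁ M₂ M₃ : Finset (Sym2 V))
    (h₁ : IsPerfectMatchingSet G M₁) (h₂ : IsPerfectMatchingSet G M₂)
    (h₃ : IsPerfectMatchingSet G M₃)
    (coreG : SimpleGraph V) [DecidableRel coreG.Adj]
    (hcore : ∀ u v : V, coreG.Adj u v ↔ G.Adj u v ∧ covCount M₁ M₂ M₃ s(u, v) ≠ 1) :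
    (∀ v : V, coreG.degree v = 0 ∨ coreG.degree v = 2 ∨ coreG.degree v = 3) ∧
    (∀ (u : V) (p : coreG.Walk u u), p.IsCycle →
      (∀ x ∈ p.support, coreG.degree x = 2) → Even p.length) := by
  refine ⟨fun v ↦ core_degree_eq_zero_or_two_or_three hcore h₁ h₂ h₃ (hcubic v), ?_⟩
  intro u p hp hdeg
  exact hp.even_length_of_alternating (fun e ↦ covCount M₁ M₂ M₃ e = 0)
    fun x hx y z hy hz hyz ↦
      covCount_eq_zero_iff_of_core_degree_eq_two hcore h₁ h₂ h₃ (hcubic x) (hdeg x hx) hy hz hyz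
end

section
/- Let G be a cubic graph with a 3-array of perfect matchings M = {M_1, M_2, M_3}, and let E_0 be the set of edges covered by none of the matchings. Then the graph G − E_0 obtained by deleting the uncovered edges admits a proper 3-edge-colouring (as a multipole/graph with vertices of degree at most 3 in which edges at a common vertex receive distinct colours and every vertex of degree 3 sees all three colours). -/
open SimpleGraph Finset

/-- Deleting the uncovered edges of a 3-array `{M₁, M₂, M₃}` of perfect matchings of a
cubic graph `G` leaves a 3-edge-colourable graph: there is a colouring of the covered
edges with 3 colours so that covered edges sharing a vertex receive distinct colours. -/
theorem deleteUncovered_threeEdgeColorable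
    {V : Type*} [Fintype V] [DecidableEq V]
    (G : SimpleGraph V) [DecidableRel G.Adj]
    (hcubic : ∀ v : V, G.degree v = 3)
    (M₁ M₂ M₃ : Finset (Sym2 V))
    (h₁ : IsPerfectMatchingSet G M₁) (h₂ : IsPerfectMatchingSet G M₂)
    (h₃ : IsPerfectMatchingSet G M₃) :
    ∃ c : Sym2 V → Fin 3, ∀ (v : V) (e f : Sym2 V),
      e ∈ G.edgeSet → f ∈ G.edgeSet →
      covCount M₁ M₂ M₃ e ≠ 0 → covCount M₁ M₂ M₃ f ≠ 0 →
      v ∈ e → v ∈ f → e ≠ f → c e ≠ c f := by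
  refine ⟨fun e => if e ∈ M₁ then 0 else if e ∈ M₂ then 1 else 2, ?_⟩
  intro v e f he hf hce hcf hve hvf hef
  simp only [covCount] at hce hcf
  have uniq : ∀ M : Finset (Sym2 V), IsPerfectMatchingSet G M →
      e ∈ M → f ∈ M → False := by
    intro M hM heM hfM
    obtain ⟨x, _, hx⟩ := hM.2 v
    exact hef (by rw [hx e ⟨heM, hve⟩, hx f ⟨hfM, hvf⟩])
  by_cases he1 : e ∈ M₁ <;> by_cases hf1 : f ∈ M₁ <;>
    by_cases he2 : e ∈ M₂ <;> by_cases hf2 : f ∈ M₂ <;>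
    simp_all <;>
    first
      | exact uniq M₁ h₁ he1 hf1
      | exact uniq M₂ h₂ he2 hf2
      | exact uniq M₃ h₃ (by simp_all) (by simp_all)
end

section
/- Every snark G has colouring defect at least 3, i.e., for every triple of perfect matchings M_1, M_2, M_3 of G, at least 3 edges of G are covered by none of the three matchings. -/
open SimpleGraph Finset

/-- A proper 3-edge-colouring of `G`: edges sharing a vertex get distinct colours. -/
def IsProper3EdgeColoring {V : Type*} (G : SimpleGraph V) (c : Sym2 V → Fin 3) : Prop :=
  ∀ (v : V) (e f : Sym2 V), e ∈ G.edgeSet → f ∈ G.edgeSet →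
    v ∈ e → v ∈ f → e ≠ f → c e ≠ c f

/-- A snark: a 2-connected cubic graph (connected and remaining connected after the
removal of any single vertex) with no proper 3-edge-colouring. -/
def IsSnark {V : Type*} [Fintype V] [DecidableEq V]
    (G : SimpleGraph V) [DecidableRel G.Adj] : Prop :=
  (∀ v : V, G.degree v = 3) ∧ G.Connected ∧
  (∀ v : V, (((⊤ : G.Subgraph).deleteVerts {v}).coe).Connected) ∧
  ¬ ∃ c : Sym2 V → Fin 3, IsProper3EdgeColoring G c

lemma eq_of_two_mem {V : Type*} (z : Sym2 V) (u w : V) (h : u ≠ w) (hu : u ∈ z) (hw : w ∈ z) :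
    z = s(u, w) := by
  obtain ⟨t, rfl⟩ := Sym2.mem_iff_exists.mp hu
  rcases Sym2.mem_iff.mp hw with rfl | rfl
  · exact absurd rfl h
  · rfl

lemma pair_inter (i j i' j' : Fin 3) (h : i ≠ j) (h' : i' ≠ j') :
    ∃ τ : Fin 3, (τ = i ∨ τ = j) ∧ (τ = i' ∨ τ = j') := by
  revert i j i' j'; decide

lemma aux_coloring {V : Type*} (G : SimpleGraph V) (N : Fin 3 → Finset (Sym2 V))
    (uniq : ∀ (i : Fin 3) (v : V) (p q : Sym2 V),
      p ∈ N i → q ∈ N i → v ∈ p → v ∈ q → p = q)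
    (cov : ∀ e ∈ G.edgeSet, ∃ i, e ∈ N i) :
    ∃ c : Sym2 V → Fin 3, IsProper3EdgeColoring G c := by
  classical
  set c : Sym2 V → Fin 3 := fun e => if e ∈ N 0 then 0 else if e ∈ N 1 then 1 else 2 with hc
  have key : ∀ e ∈ G.edgeSet, e ∈ N (c e) := by
    intro e he
    by_cases h0 : e ∈ N 0
    · simp [hc, h0]
    · by_cases h1 : e ∈ N 1
      · simp [hc, h0, h1]
      · have h2 : e ∈ N 2 := by
          obtain ⟨i, hi⟩ := cov e he
          fin_cases i
          · exact absurd hi h0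
          · exact absurd hi h1
          · exact hi
        simp [hc, h0, h1, h2]
  refine ⟨c, fun v e f he hf hve hvf hne hcc => ?_⟩
  refine hne (uniq (c e) v e f (key e he) ?_ hve hvf)
  rw [hcc]; exact key f hf

/-- Every snark has colouring defect at least 3: any triple of perfect matchings leaves
at least 3 edges uncovered. -/
theorem snark_defect_ge_three
    {V : Type*} [Fintype V] [DecidableEq V]
    (G : SimpleGraph V) [DecidableRel G.Adj]
    (hsnark : IsSnark G)
    (M₁ M₂ M₃ : Finset (Sym2 V))
    (h₁ : IsPerfectMatchingSet G M₁) (h₂ : IsPerfectMatchingSet G M₂)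
    (h₃ : IsPerfectMatchingSet G M₃) :
    3 ≤ (G.edgeFinset.filter fun e => e ∉ M₁ ∧ e ∉ M₂ ∧ e ∉ M₃).card := by
  classical
  obtain ⟨hdeg, -, -, hnc⟩ := hsnark
  by_contra hcard
  push_neg at hcard
  set U := (G.edgeFinset.filter fun e => e ∉ M₁ ∧ e ∉ M₂ ∧ e ∉ M₃) with hUdef
  set MM : Fin 3 → Finset (Sym2 V) := ![M₁, M₂, M₃] with hMMdef
  have hPM : ∀ i, IsPerfectMatchingSet G (MM i) := by
    intro i; fin_cases i <;> simpa [hMMdef]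
  choose m hm using fun (i : Fin 3) (v : V) => (hPM i).2 v
  have hmM : ∀ i v, m i v ∈ MM i := fun i v => (hm i v).1.1
  have hmv : ∀ i v, v ∈ m i v := fun i v => (hm i v).1.2
  have hmu : ∀ i (v : V) e, e ∈ MM i → v ∈ e → e = m i v :=
    fun i v e hE hv => (hm i v).2 e ⟨hE, hv⟩
  have hmE : ∀ i v, m i v ∈ G.edgeSet := fun i v => (hPM i).1 (hmM i v)
  have hmuq : ∀ i (v : V) p q, p ∈ MM i → q ∈ MM i → v ∈ p → v ∈ q → p = q :=
    fun i v p q hp hq hvp hvq => (hmu i v p hp hvp).trans (hmu i v q hq hvq).symm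
  have hUmem : ∀ e, e ∈ U ↔ e ∈ G.edgeSet ∧ ∀ i, e ∉ MM i := by
    intro e
    rw [hUdef, mem_filter, mem_edgeFinset]
    constructor
    · rintro ⟨hE, hh1, hh2, hh3⟩
      exact ⟨hE, fun i => by fin_cases i <;> simpa [hMMdef]⟩
    · rintro ⟨hE, h⟩
      exact ⟨hE, by simpa [hMMdef] using h 0, by simpa [hMMdef] using h 1,
        by simpa [hMMdef] using h 2⟩
  have hinc3 : ∀ v : V, (G.incidenceFinset v).card = 3 := fun v => by
    rw [G.card_incidenceFinset_eq_degree]; exact hdeg v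
  have hmInc : ∀ i v, m i v ∈ G.incidenceFinset v := fun i v => by
    rw [mem_incidenceFinset]; exact ⟨hmE i v, hmv i v⟩
  -- at any vertex where two of the matchings pick the same edge, some incident
  -- edge is uncovered
  have third : ∀ (v : V) (i j : Fin 3), i ≠ j → m i v = m j v →
      ∃ r, r ∈ G.edgeSet ∧ v ∈ r ∧ ∀ l, r ∉ MM l := by
    intro v i j hij heq
    set T : Finset (Sym2 V) := Finset.image (fun l => m l v) (Finset.univ.erase j) with hT
    have hTcard : T.card ≤ 2 := by
      refine le_trans Finset.card_image_le ?_
      rw [Finset.card_erase_of_mem (Finset.mem_univ j)]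
      simp
    have hsub : ¬ G.incidenceFinset v ⊆ T := by
      intro hs
      have h3 := Finset.card_le_card hs
      rw [hinc3 v] at h3; omega
    obtain ⟨r, hr, hrT⟩ := Finset.not_subset.mp hsub
    rw [mem_incidenceFinset] at hr
    refine ⟨r, hr.1, hr.2, fun l hl => hrT ?_⟩
    have hrm : r = m l v := hmu l v r hl hr.2
    rw [hT, Finset.mem_image]
    by_cases hlj : l = j
    · exact ⟨i, Finset.mem_erase.mpr ⟨hij, Finset.mem_univ i⟩, by rw [hrm, hlj, heq]⟩
    · exact ⟨l, Finset.mem_erase.mpr ⟨hlj, Finset.mem_univ l⟩, hrm.symm⟩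
  -- at any endpoint of an uncovered edge, two of the matchings pick the same edge
  have pigeon : ∀ (v : V) (e0 : Sym2 V), e0 ∈ G.edgeSet → v ∈ e0 → (∀ l, e0 ∉ MM l) →
      ∃ i j, i ≠ j ∧ m i v = m j v := by
    intro v e0 hE hv hunc
    set S := (G.incidenceFinset v).erase e0 with hS
    have hScard : S.card = 2 := by
      rw [hS, Finset.card_erase_of_mem (by rw [mem_incidenceFinset]; exact ⟨hE, hv⟩), hinc3]
    obtain ⟨p, q, hpq, hSeq⟩ := Finset.card_eq_two.mp hScard
    have hmS : ∀ l, m l v ∈ S := by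
      intro l
      rw [hS, Finset.mem_erase]
      exact ⟨fun h => hunc l (h ▸ hmM l v), hmInc l v⟩
    obtain ⟨i, j, hij, hfij⟩ := Fintype.exists_ne_map_eq_of_card_lt
      (fun l : Fin 3 => decide (m l v = p)) (by simp)
    refine ⟨i, j, hij, ?_⟩
    have hi := hmS i; have hj := hmS j
    rw [hSeq, Finset.mem_insert, Finset.mem_singleton] at hi hj
    rcases hi with hi | hi <;> rcases hj with hj | hj
    · exact hi.trans hj.symm
    · exfalso; rw [hi, hj] at hfij; simp [hpq, Ne.symm hpq] at hfij
    · exfalso; rw [hi, hj] at hfij; simp [hpq, Ne.symm hpq] at hfij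
    · exact hi.trans hj.symm
  have hc012 : U.card = 0 ∨ U.card = 1 ∨ U.card = 2 := by omega
  rcases hc012 with h0 | h1 | h2
  -- Case 0 : every edge covered
  · refine hnc (aux_coloring G MM hmuq ?_)
    intro e he
    by_contra hno
    push_neg at hno
    have heU : e ∈ U := (hUmem e).mpr ⟨he, hno⟩
    rw [Finset.card_eq_zero.mp h0] at heU
    exact absurd heU (Finset.notMem_empty e)
  -- Case 1 : exactly one uncovered edge
  · obtain ⟨e1, hU1⟩ := Finset.card_eq_one.mp h1
    induction e1 using Sym2.ind with
    | _ a b =>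
    obtain ⟨hE1, hunc1⟩ := (hUmem s(a, b)).mp (hU1 ▸ Finset.mem_singleton_self _)
    have hab : a ≠ b := (G.mem_edgeSet.mp hE1).ne
    obtain ⟨i, j, hij, heq⟩ := pigeon a s(a, b) hE1 (by simp) hunc1
    obtain ⟨x, hfx⟩ := Sym2.mem_iff_exists.mp (hmv i a)
    have hfE : m i a ∈ G.edgeSet := hmE i a
    have hadj : G.Adj a x := by rwa [hfx, mem_edgeSet] at hfE
    have hxa : x ≠ a := hadj.ne'
    have hfne1 : m i a ≠ s(a, b) := fun h => hunc1 i (h ▸ hmM i a)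
    have hxb : x ≠ b := fun h => hfne1 (by rw [hfx, h])
    have hxf : x ∈ m i a := by rw [hfx]; simp
    have hmix : m i x = m i a := (hmu i x (m i a) (hmM i a) hxf).symm
    have hmjx : m j x = m i a := (hmu j x (m i a) (heq ▸ hmM j a) hxf).symm
    obtain ⟨r, hrE, hrx, hrunc⟩ := third x i j hij (by rw [hmix, hmjx])
    have hrU : r ∈ U := (hUmem r).mpr ⟨hrE, hrunc⟩
    rw [hU1, Finset.mem_singleton] at hrU
    rw [hrU] at hrx
    rcases Sym2.mem_iff.mp hrx with h | h
    · exact hxa h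
    · exact hxb h
  -- Case 2 : exactly two uncovered edges
  · obtain ⟨e1, e2, hee, hU2⟩ := Finset.card_eq_two.mp h2
    have hmem1 := (hUmem e1).mp (by rw [hU2]; simp)
    have hmem2 := (hUmem e2).mp (by rw [hU2]; simp)
    obtain ⟨hE1, hunc1⟩ := hmem1
    obtain ⟨hE2, hunc2⟩ := hmem2
    have hUonly : ∀ r, r ∈ G.edgeSet → (∀ l, r ∉ MM l) → r = e1 ∨ r = e2 := by
      intro r hrE hrunc
      have : r ∈ U := (hUmem r).mpr ⟨hrE, hrunc⟩
      rw [hU2] at this; simpa using this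
    -- e1 and e2 are disjoint
    have hdisj : ∀ v, v ∈ e1 → v ∉ e2 := by
      intro v hv1 hv2
      set S := ((G.incidenceFinset v).erase e1).erase e2 with hS
      have hScard : S.card = 1 := by
        rw [hS, Finset.card_erase_of_mem, Finset.card_erase_of_mem, hinc3]
        · rw [mem_incidenceFinset]; exact ⟨hE1, hv1⟩
        · rw [Finset.mem_erase, mem_incidenceFinset]
          exact ⟨hee.symm, hE2, hv2⟩
      obtain ⟨w, hw⟩ := Finset.card_eq_one.mp hScard
      have hmw : ∀ l, m l v = w := by
        intro l
        have hin : m l v ∈ S := by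
          rw [hS, Finset.mem_erase, Finset.mem_erase]
          exact ⟨fun h => hunc2 l (h ▸ hmM l v), fun h => hunc1 l (h ▸ hmM l v), hmInc l v⟩
        rw [hw, Finset.mem_singleton] at hin; exact hin
      have hvw : v ∈ w := by rw [← hmw 0]; exact hmv 0 v
      obtain ⟨y, hwy⟩ := Sym2.mem_iff_exists.mp hvw
      have hwE : w ∈ G.edgeSet := by rw [← hmw 0]; exact hmE 0 v
      have hadj : G.Adj v y := by rwa [hwy, mem_edgeSet] at hwE
      have hyw : y ∈ w := by rw [hwy]; simp
      have hmy : ∀ l, m l y = w := fun l =>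
        (hmu l y w (by rw [← hmw l]; exact hmM l v) hyw).symm
      obtain ⟨r, hrE, hry, hrunc⟩ := third y 0 1 (by decide) (by rw [hmy 0, hmy 1])
      have hwcov : w ∈ MM 0 := (hmw 0) ▸ hmM 0 v
      rcases hUonly r hrE hrunc with rfl | rfl
      · have : r = s(v, y) := eq_of_two_mem r v y hadj.ne hv1 hry
        rw [← hwy] at this
        exact hunc1 0 (this ▸ hwcov)
      · have : r = s(v, y) := eq_of_two_mem r v y hadj.ne hv2 hry
        rw [← hwy] at this
        exact hunc2 0 (this ▸ hwcov)
    -- main analysis at an endpoint of e1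
    have main : ∀ u : V, u ∈ e1 → ∃ (x : V) (i j : Fin 3), i ≠ j ∧ x ∈ e2 ∧
        m i u = s(u, x) ∧ m j u = s(u, x) := by
      intro u hu
      obtain ⟨i, j, hij, heq⟩ := pigeon u e1 hE1 hu hunc1
      obtain ⟨x, hfx⟩ := Sym2.mem_iff_exists.mp (hmv i u)
      have hfE : m i u ∈ G.edgeSet := hmE i u
      have hadj : G.Adj u x := by rwa [hfx, mem_edgeSet] at hfE
      have hfne1 : m i u ≠ e1 := fun h => hunc1 i (h ▸ hmM i u)
      have hxf : x ∈ m i u := by rw [hfx]; simp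
      have hmix : m i x = m i u := (hmu i x (m i u) (hmM i u) hxf).symm
      have hmjx : m j x = m i u := (hmu j x (m i u) (heq ▸ hmM j u) hxf).symm
      obtain ⟨r, hrE, hrx, hrunc⟩ := third x i j hij (by rw [hmix, hmjx])
      rcases hUonly r hrE hrunc with rfl | rfl
      · exfalso
        apply hfne1
        rw [hfx]
        exact (eq_of_two_mem r u x hadj.ne hu hrx).symm
      · exact ⟨x, i, j, hij, hrx, hfx, heq ▸ hfx⟩
    -- endpoints of e1
    induction e1 using Sym2.ind with
    | _ a b =>
    have hab : a ≠ b := (G.mem_edgeSet.mp hE1).ne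
    obtain ⟨x, i, j, hij, hx2, hfi, hfj⟩ := main a (by simp)
    obtain ⟨y, i', j', hij', hy2, hgi, hgj⟩ := main b (Sym2.mem_mk_right a b)
    have hxadj : G.Adj a x := by
      have := hmE i a; rwa [hfi, mem_edgeSet] at this
    have hyadj : G.Adj b y := by
      have := hmE i' b; rwa [hgi, mem_edgeSet] at this
    have hfg : s(a, x) ≠ s(b, y) := by
      intro h
      have ha : a ∈ s(b, y) := h ▸ Sym2.mem_mk_left a x
      rcases Sym2.mem_iff.mp ha with h' | h'
      · exact hab h'
      · exact hdisj a (by simp) (h' ▸ hy2)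
    have hxy : x ≠ y := by
      intro h
      obtain ⟨τ, hτ1, hτ2⟩ := pair_inter i j i' j' hij hij'
      have hfτ : m τ a = s(a, x) := by rcases hτ1 with rfl | rfl; exacts [hfi, hfj]
      have hgτ : m τ b = s(b, y) := by rcases hτ2 with rfl | rfl; exacts [hgi, hgj]
      have h1 : m τ x = s(a, x) :=
        (hmu τ x s(a, x) (hfτ ▸ hmM τ a) (by simp)).symm
      have h2 : m τ y = s(b, y) :=
        (hmu τ y s(b, y) (hgτ ▸ hmM τ b) (by simp)).symm
      subst h
      exact hfg (h1.symm.trans h2)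
    have he2xy : e2 = s(x, y) := eq_of_two_mem e2 x y hxy hx2 hy2
    obtain ⟨τ, hτ1, hτ2⟩ := pair_inter i j i' j' hij hij'
    have hfτ : m τ a = s(a, x) := by rcases hτ1 with rfl | rfl; exacts [hfi, hfj]
    have hgτ : m τ b = s(b, y) := by rcases hτ2 with rfl | rfl; exacts [hgi, hgj]
    have hfMτ : s(a, x) ∈ MM τ := hfτ ▸ hmM τ a
    have hgMτ : s(b, y) ∈ MM τ := hgτ ▸ hmM τ b
    have hmτx : m τ x = s(a, x) := (hmu τ x s(a, x) hfMτ (by simp)).symm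
    have hmτy : m τ y = s(b, y) := (hmu τ y s(b, y) hgMτ (by simp)).symm
    have hσf : ∃ σ, σ ≠ τ ∧ s(a, x) ∈ MM σ := by
      rcases hτ1 with rfl | rfl
      · exact ⟨j, hij.symm, hfj ▸ hmM j a⟩
      · exact ⟨i, hij, hfi ▸ hmM i a⟩
    have hσg : ∃ σ, σ ≠ τ ∧ s(b, y) ∈ MM σ := by
      rcases hτ2 with rfl | rfl
      · exact ⟨j', hij'.symm, hgj ▸ hmM j' b⟩
      · exact ⟨i', hij', hgi ▸ hmM i' b⟩
    set N : Fin 3 → Finset (Sym2 V) :=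
      fun l => if l = τ then (((MM τ).erase s(a, x)).erase s(b, y)) ∪ {s(a, b), e2}
        else MM l with hN
    have hNmem : ∀ p, p ∈ N τ ↔
        ((p ≠ s(b, y) ∧ p ≠ s(a, x) ∧ p ∈ MM τ) ∨ (p = s(a, b) ∨ p = e2)) := by
      intro p
      simp only [hN, eq_self_iff_true, if_true, Finset.mem_union, Finset.mem_erase,
        Finset.mem_insert, Finset.mem_singleton]
    have hNother : ∀ l, l ≠ τ → N l = MM l := by
      intro l h
      simp only [hN]
      rw [if_neg h]
    refine hnc (aux_coloring G N ?_ ?_)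
    · -- uniqueness
      intro l v p q hp hq hvp hvq
      by_cases hl : l = τ
      · subst hl
        rw [hNmem p] at hp
        rw [hNmem q] at hq
        have hblock : ∀ z, z ∈ MM l → z ≠ s(a, x) → z ≠ s(b, y) → v ∈ z →
            v ∉ s(a, b) ∧ v ∉ e2 := by
          intro z h1 h2 h3 hv
          constructor
          · intro hv1
            rcases Sym2.mem_iff.mp hv1 with rfl | rfl
            · exact h2 ((hmu l v z h1 hv).trans hfτ)
            · exact h3 ((hmu l v z h1 hv).trans hgτ)
          · intro hv2
            rw [he2xy] at hv2
            rcases Sym2.mem_iff.mp hv2 with rfl | rfl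
            · exact h2 ((hmu l v z h1 hv).trans hmτx)
            · exact h3 ((hmu l v z h1 hv).trans hmτy)
        rcases hp with ⟨hp1, hp2, hp3⟩ | hp
        · rcases hq with ⟨hq1, hq2, hq3⟩ | hq
          · exact hmuq l v p q hp3 hq3 hvp hvq
          · exfalso
            have := hblock p hp3 hp2 hp1 hvp
            rcases hq with rfl | rfl
            · exact this.1 hvq
            · exact this.2 hvq
        · rcases hq with ⟨hq1, hq2, hq3⟩ | hq
          · exfalso
            have := hblock q hq3 hq2 hq1 hvq
            rcases hp with rfl | rfl
            · exact this.1 hvp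
            · exact this.2 hvp
          · rcases hp with rfl | rfl <;> rcases hq with h | h
            · exact h.symm
            · exact absurd (h ▸ hvq) (hdisj v hvp)
            · exact absurd hvp (hdisj v (h ▸ hvq))
            · exact h.symm
      · rw [hNother l hl] at hp hq
        exact hmuq l v p q hp hq hvp hvq
    · -- coverage
      intro e he
      by_cases hcov : ∀ l, e ∉ MM l
      · rcases hUonly e he hcov with rfl | rfl
        · refine ⟨τ, ?_⟩
          rw [hNmem]
          exact Or.inr (Or.inl rfl)
        · refine ⟨τ, ?_⟩
          rw [hNmem]
          exact Or.inr (Or.inr rfl)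
      · push_neg at hcov
        obtain ⟨l, hl⟩ := hcov
        by_cases hlτ : l = τ
        · subst hlτ
          by_cases hef : e = s(a, x)
          · obtain ⟨σ, hσne, hσmem⟩ := hσf
            refine ⟨σ, ?_⟩
            rw [hNother σ hσne]
            exact hef ▸ hσmem
          · by_cases heg : e = s(b, y)
            · obtain ⟨σ, hσne, hσmem⟩ := hσg
              refine ⟨σ, ?_⟩
              rw [hNother σ hσne]
              exact heg ▸ hσmem
            · refine ⟨l, ?_⟩
              rw [hNmem]
              exact Or.inl ⟨heg, hef, hl⟩
        · refine ⟨l, ?_⟩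
          rw [hNother l hlτ]
          exact hl
end

section
/- Let G be a bridgeless cubic graph. Then ω(G) ≤ 2·dn(G), where ω(G) is the oddness of G (the minimum number of odd circuits in a 2-factor of G) and dn(G) is the density (the minimum of |M_1 ∩ M_2| over pairs of perfect matchings M_1, M_2 of G). -/
open SimpleGraph Finset

/-- The number of odd components (components with an odd number of vertices) of `H`. -/
noncomputable def oddComponentsCount {V : Type*} (H : SimpleGraph V) : ℕ :=
  Nat.card {c : H.ConnectedComponent // Odd (Nat.card c.supp)}

/-- The oddness of a (bridgeless cubic) graph: the minimum number of odd circuits in a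
2-factor, a 2-factor being the complement of a perfect matching. -/
noncomputable def oddness {V : Type*} (G : SimpleGraph V) : ℕ :=
  sInf {n | ∃ M : Finset (Sym2 V), IsPerfectMatchingSet G M ∧
    n = oddComponentsCount (G.deleteEdges ↑M)}

/-- The density of `G`: the minimum number of common edges of two perfect matchings. -/
noncomputable def density {V : Type*} [DecidableEq V] (G : SimpleGraph V) : ℕ :=
  sInf {n | ∃ M₁ M₂ : Finset (Sym2 V), IsPerfectMatchingSet G M₁ ∧
    IsPerfectMatchingSet G M₂ ∧ n = (M₁ ∩ M₂).card}

/-!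
An odd component of `G - M₁`, for a perfect matching `M₁`, cannot be closed under a second
perfect matching `M₂`, since `M₂` would then pair off its vertices. So every odd component
contains an endpoint of an edge of `M₁ ∩ M₂`; distinct components contain distinct vertices,
hence there are at most `2 |M₁ ∩ M₂|` odd components. Taking `M₁, M₂` that realise the
density bounds the oddness.
-/

namespace IsPerfectMatchingSet

variable {V : Type*} {G : SimpleGraph V} {M : Finset (Sym2 V)}

theorem even_card_of_closed (hM : IsPerfectMatchingSet G M) {S : Set V} [Finite S]
    (hS : ∀ e ∈ M, ∀ v ∈ e, ∀ w ∈ e, v ∈ S → w ∈ S) : Even (Nat.card S) := by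
  let N : G.Subgraph :=
    { verts := S
      Adj := fun a b => a ∈ S ∧ b ∈ S ∧ s(a, b) ∈ M
      adj_sub := fun ⟨_, _, hab⟩ => G.mem_edgeSet.mp (hM.1 hab)
      edge_vert := fun ⟨ha, _, _⟩ => ha
      symm := ⟨fun a b ⟨ha, hb, hab⟩ => ⟨hb, ha, Sym2.eq_swap ▸ hab⟩⟩ }
  have hN : N.IsMatching := by
    intro v hv
    obtain ⟨e, ⟨heM, hve⟩, he⟩ := hM.2 v
    obtain ⟨w, rfl⟩ := Sym2.mem_iff_exists.mp hve
    refine ⟨w, ⟨hv, hS _ heM v hve w (Sym2.mem_mk_right v w) hv, heM⟩, ?_⟩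
    rintro w' ⟨-, -, hw'⟩
    exact Sym2.congr_right.mp (he _ ⟨hw', Sym2.mem_mk_left v w'⟩)
  have : Fintype N.verts := Fintype.ofFinite S
  simpa only [Set.toFinset_card, ← Nat.card_eq_fintype_card] using hN.even_card

end IsPerfectMatchingSet

theorem Finset.card_biUnion_toFinset_le {V : Type*} [DecidableEq V] (E : Finset (Sym2 V)) :
    #(E.biUnion Sym2.toFinset) ≤ 2 * #E :=
  calc #(E.biUnion Sym2.toFinset) ≤ ∑ e ∈ E, #e.toFinset := card_biUnion_le
    _ ≤ ∑ _e ∈ E, 2 := sum_le_sum fun e _ => by rw [Sym2.card_toFinset]; split_ifs <;> omega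
    _ = 2 * #E := by rw [sum_const, smul_eq_mul, mul_comm]

section

variable {V : Type*} [DecidableEq V] {G : SimpleGraph V} {M₁ M₂ : Finset (Sym2 V)}

theorem exists_mem_supp_mem_inter_of_odd (h₂ : IsPerfectMatchingSet G M₂)
    (c : (G.deleteEdges ↑M₁).ConnectedComponent) (hc : Odd (Nat.card c.supp)) :
    ∃ v ∈ c.supp, ∃ e ∈ M₁ ∩ M₂, v ∈ e := by
  by_contra! hM
  have : Finite c.supp := Nat.finite_of_card_ne_zero hc.pos.ne'
  refine Nat.not_even_iff_odd.mpr hc (h₂.even_card_of_closed fun e he v hv w hw hvc => ?_)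
  obtain ⟨u, rfl⟩ := Sym2.mem_iff_exists.mp hv
  rcases Sym2.mem_iff.mp hw with rfl | rfl
  · exact hvc
  · have heM₁ : s(v, w) ∉ M₁ := fun h₁ => hM v hvc _ (mem_inter.mpr ⟨h₁, he⟩) hv
    exact c.mem_supp_of_adj_mem_supp hvc
      (deleteEdges_adj.mpr ⟨G.mem_edgeSet.mp (h₂.1 he), by exact_mod_cast heM₁⟩)

theorem oddComponentsCount_deleteEdges_le (h₂ : IsPerfectMatchingSet G M₂) :
    oddComponentsCount (G.deleteEdges ↑M₁) ≤ 2 * #(M₁ ∩ M₂) := by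
  choose v hvc e he hve using fun c : {c : (G.deleteEdges ↑M₁).ConnectedComponent //
    Odd (Nat.card c.supp)} => exists_mem_supp_mem_inter_of_odd h₂ c.1 c.2
  let f (c : {c : (G.deleteEdges ↑M₁).ConnectedComponent // Odd (Nat.card c.supp)}) :
      (M₁ ∩ M₂).biUnion Sym2.toFinset :=
    ⟨v c, mem_biUnion.mpr ⟨e c, he c, Sym2.mem_toFinset.mpr (hve c)⟩⟩
  have hf : Function.Injective f := fun c d hcd => Subtype.ext <| by
    rw [← (ConnectedComponent.mem_supp_iff _ _).mp (hvc c),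
      ← (ConnectedComponent.mem_supp_iff _ _).mp (hvc d),
      show v c = v d from congrArg Subtype.val hcd]
  calc oddComponentsCount (G.deleteEdges ↑M₁)
      ≤ #((M₁ ∩ M₂).biUnion Sym2.toFinset) :=
        (Nat.card_le_card_of_injective f hf).trans_eq (Nat.card_eq_finsetCard _)
    _ ≤ 2 * #(M₁ ∩ M₂) := card_biUnion_toFinset_le _

end

theorem oddness_le_two_mul_density_general
    {V : Type*} [DecidableEq V]
    (G : SimpleGraph V) :
    oddness G ≤ 2 * density G := by
  by_cases h : ∃ M, IsPerfectMatchingSet G M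
  · obtain ⟨M, hM⟩ := h
    obtain ⟨M₁, M₂, h₁, h₂, hdn⟩ : density G ∈ {n | ∃ M₁ M₂ : Finset (Sym2 V),
        IsPerfectMatchingSet G M₁ ∧ IsPerfectMatchingSet G M₂ ∧ n = #(M₁ ∩ M₂)} :=
      Nat.sInf_mem ⟨_, M, M, hM, hM, rfl⟩
    calc oddness G ≤ oddComponentsCount (G.deleteEdges ↑M₁) := Nat.sInf_le ⟨M₁, h₁, rfl⟩
      _ ≤ 2 * #(M₁ ∩ M₂) := oddComponentsCount_deleteEdges_le h₂
      _ = 2 * density G := by rw [hdn]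
  · -- without perfect matchings, `oddness G = sInf ∅ = 0`
    simp_all [oddness]

/-- For every bridgeless cubic graph `G`, `ω(G) ≤ 2·dn(G)`: the oddness is at most
twice the density. -/
theorem oddness_le_two_mul_density
    {V : Type*} [Fintype V] [DecidableEq V]
    (G : SimpleGraph V) [DecidableRel G.Adj]
    (hcubic : ∀ v : V, G.degree v = 3)
    (hbridgeless : ∀ e ∈ G.edgeSet, ¬ G.IsBridge e) :
    oddness G ≤ 2 * density G :=
  oddness_le_two_mul_density_general G
end

section
/- For every bridgeless cubic graph G, df(G) ≥ (3/2)·ω(G), i.e., 2·df(G) ≥ 3·ω(G), where df(G) is the colouring defect and ω(G) is the oddness. -/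
open SimpleGraph Finset

/-- The number of edges of `G` left uncovered by the 3-array `{M₁, M₂, M₃}`. -/
def uncoveredCard {V : Type*} [Fintype V] [DecidableEq V]
    (G : SimpleGraph V) [DecidableRel G.Adj] (M₁ M₂ M₃ : Finset (Sym2 V)) : ℕ :=
  (G.edgeFinset.filter fun e => e ∉ M₁ ∧ e ∉ M₂ ∧ e ∉ M₃).card

/-- The colouring defect of `G`: the minimum number of edges left uncovered by a triple
of perfect matchings. -/
noncomputable def defect {V : Type*} [Fintype V] [DecidableEq V]
    (G : SimpleGraph V) [DecidableRel G.Adj] : ℕ :=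
  sInf {n | ∃ M₁ M₂ M₃ : Finset (Sym2 V), IsPerfectMatchingSet G M₁ ∧
    IsPerfectMatchingSet G M₂ ∧ IsPerfectMatchingSet G M₃ ∧
    n = uncoveredCard G M₁ M₂ M₃}

section Aux

/-- A finset admitting a fixed-point-free involution has even cardinality. -/
lemma even_card_of_invol {α : Type*} [DecidableEq α] :
    ∀ (n : ℕ) (s : Finset α), s.card = n → ∀ f : α → α, (∀ a ∈ s, f a ∈ s) →
    (∀ a ∈ s, f (f a) = a) → (∀ a ∈ s, f a ≠ a) → Even s.card := by
  intro n
  induction n using Nat.strong_induction_on with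
  | _ n ih =>
    intro s hcard f hmem hinv hne
    rcases s.eq_empty_or_nonempty with rfl | ⟨a, ha⟩
    · simp
    · have hfa : f a ∈ s := hmem a ha
      have hane : f a ≠ a := hne a ha
      set t := s \ {a, f a} with ht
      have hsub : ({a, f a} : Finset α) ⊆ s := by
        intro x hx; rcases Finset.mem_insert.1 hx with rfl | hx
        · exact ha
        · simp only [Finset.mem_singleton] at hx; subst hx; exact hfa
      have hcard2 : ({a, f a} : Finset α).card = 2 := Finset.card_pair hane.symm
      have htcard : t.card = s.card - 2 := by
        rw [ht, Finset.card_sdiff_of_subset hsub, hcard2]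
      have hts : ∀ b ∈ t, b ∈ s := fun b hb => (Finset.mem_sdiff.1 hb).1
      have htmem : ∀ b ∈ t, f b ∈ t := by
        intro b hb
        obtain ⟨hbs, hbn⟩ := Finset.mem_sdiff.1 hb
        refine Finset.mem_sdiff.2 ⟨hmem b hbs, ?_⟩
        intro hc
        rcases Finset.mem_insert.1 hc with hc | hc
        · apply hbn
          have : f (f b) = f a := by rw [hc]
          rw [hinv b hbs] at this
          simp [this]
        · simp only [Finset.mem_singleton] at hc
          apply hbn
          have : f (f b) = f (f a) := by rw [hc]
          rw [hinv b hbs, hinv a ha] at this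
          simp [this]
      have hnpos : 0 < s.card := Finset.card_pos.2 ⟨a, ha⟩
      have h1 : s.card ≠ 1 := by
        intro h1
        obtain ⟨x, hx⟩ := Finset.card_eq_one.1 h1
        rw [hx] at ha hfa
        simp only [Finset.mem_singleton] at ha hfa
        exact hane (hfa.trans ha.symm)
      have h2 : 2 ≤ s.card := by omega
      have := ih t.card (by omega) t rfl f htmem
        (fun b hb => hinv b (hts b hb)) (fun b hb => hne b (hts b hb))
      rw [htcard] at this
      obtain ⟨m, hm⟩ := this
      exact ⟨m + 1, by omega⟩


variable {V : Type*} [DecidableEq V] {G : SimpleGraph V} {M : Finset (Sym2 V)}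

noncomputable def pmE (hM : IsPerfectMatchingSet G M) (v : V) : Sym2 V :=
  Finset.choose (fun e => v ∈ e) M (hM.2 v)

lemma pmE_mem (hM : IsPerfectMatchingSet G M) (v : V) : pmE hM v ∈ M :=
  Finset.choose_mem _ _ _

lemma pmE_self (hM : IsPerfectMatchingSet G M) (v : V) : v ∈ pmE hM v :=
  (Finset.choose_spec (fun e => v ∈ e) M (hM.2 v)).2

lemma pmE_eq (hM : IsPerfectMatchingSet G M) {v : V} {e : Sym2 V}
    (he : e ∈ M) (hv : v ∈ e) : e = pmE hM v :=
  (hM.2 v).unique ⟨he, hv⟩ ⟨pmE_mem hM v, pmE_self hM v⟩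

lemma pmE_edge (hM : IsPerfectMatchingSet G M) (v : V) : pmE hM v ∈ G.edgeSet :=
  hM.1 (pmE_mem hM v)

noncomputable def pmP (hM : IsPerfectMatchingSet G M) (v : V) : V :=
  Sym2.Mem.other' (pmE_self hM v)

lemma pmP_spec (hM : IsPerfectMatchingSet G M) (v : V) : s(v, pmP hM v) = pmE hM v :=
  Sym2.other_spec' (pmE_self hM v)

lemma pmP_adj (hM : IsPerfectMatchingSet G M) (v : V) : G.Adj v (pmP hM v) := by
  rw [← SimpleGraph.mem_edgeSet, pmP_spec hM v]; exact pmE_edge hM v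

lemma pmP_ne (hM : IsPerfectMatchingSet G M) (v : V) : pmP hM v ≠ v :=
  fun h => G.irrefl (h ▸ pmP_adj hM v)

lemma pmE_pmP (hM : IsPerfectMatchingSet G M) (v : V) :
    pmE hM (pmP hM v) = pmE hM v := by
  refine (pmE_eq hM (pmE_mem hM v) ?_).symm
  rw [← pmP_spec hM v]; exact Sym2.mem_mk_right _ _

lemma pmP_invol (hM : IsPerfectMatchingSet G M) (v : V) : pmP hM (pmP hM v) = v := by
  have h1 : s(pmP hM v, pmP hM (pmP hM v)) = pmE hM (pmP hM v) := pmP_spec hM (pmP hM v)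
  rw [pmE_pmP hM v, ← pmP_spec hM v] at h1
  rw [Sym2.eq_iff] at h1
  rcases h1 with ⟨h, h'⟩ | ⟨h, h'⟩
  · exact absurd h (pmP_ne hM v)
  · exact h'

end Aux

section Graph
variable {V : Type*} [Fintype V] [DecidableEq V] {G : SimpleGraph V}
variable {Ma Mb Mc : Finset (Sym2 V)}

/-- Two endpoints of an edge not in `Ma` lie in the same component of `G − Ma`. -/
lemma mk_eq_of_mem_edge {e : Sym2 V} (he : e ∈ G.edgeSet) (hea : e ∉ Ma)
    {x y : V} (hx : x ∈ e) (hy : y ∈ e) :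
    (G.deleteEdges (↑Ma : Set (Sym2 V))).connectedComponentMk x =
      (G.deleteEdges (↑Ma : Set (Sym2 V))).connectedComponentMk y := by
  induction e with
  | _ a b =>
    have hadj : (G.deleteEdges (↑Ma : Set (Sym2 V))).Adj a b := by
      rw [SimpleGraph.deleteEdges_adj]
      exact ⟨G.mem_edgeSet.1 he, fun hc => hea (Finset.mem_coe.1 hc)⟩
    rw [Sym2.mem_iff] at hx hy
    rcases hx with rfl | rfl <;> rcases hy with rfl | rfl
    · rfl
    · exact ConnectedComponent.connectedComponentMk_eq_of_adj hadj
    · exact (ConnectedComponent.connectedComponentMk_eq_of_adj hadj).symm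
    · rfl

/-- In an odd component of `G − Ma` there is a vertex whose `Mb`-edge lies in `Ma`. -/
lemma exists_S (hMa : IsPerfectMatchingSet G Ma) (hMb : IsPerfectMatchingSet G Mb)
    (C : (G.deleteEdges (↑Ma : Set (Sym2 V))).ConnectedComponent)
    (hodd : Odd (Nat.card C.supp)) :
    ∃ v : V, (G.deleteEdges (↑Ma : Set (Sym2 V))).connectedComponentMk v = C ∧
      pmE hMb v ∈ Ma := by
  classical
  by_contra hcon
  push_neg at hcon
  have hsupp : Nat.card C.supp =
      (univ.filter fun v => (G.deleteEdges (↑Ma : Set (Sym2 V))).connectedComponentMk v = C).card := by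
    rw [Nat.card_coe_set_eq, Set.ncard_eq_toFinset_card']
    congr 1
    ext v
    simp [ConnectedComponent.mem_supp_iff]
  have heven : Even (univ.filter fun v =>
      (G.deleteEdges (↑Ma : Set (Sym2 V))).connectedComponentMk v = C).card := by
    apply even_card_of_invol _ _ rfl (pmP hMb)
    · intro v hv
      simp only [Finset.mem_filter, Finset.mem_univ, true_and] at hv ⊢
      rw [← hv]
      exact (mk_eq_of_mem_edge (pmE_edge hMb v) (hcon v hv)
        (Sym2.other_mem' (pmE_self hMb v)) (pmE_self hMb v))
    · intro v _; exact pmP_invol hMb v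
    · intro v _; exact pmP_ne hMb v
  rw [hsupp] at hodd
  exact (Nat.not_even_iff_odd.2 hodd) heven

variable [DecidableRel G.Adj]

/-- If the `Ma`-edge at `v` is doubly covered, there is an uncovered edge at `v`. -/
lemma exists_uncovered_at (hcubic : ∀ v : V, G.degree v = 3)
    (hMa : IsPerfectMatchingSet G Ma) (hMb : IsPerfectMatchingSet G Mb)
    (hMc : IsPerfectMatchingSet G Mc) {v : V} (h : pmE hMa v ∈ Mb) :
    ∃ q : Sym2 V, q ∈ G.edgeSet ∧ v ∈ q ∧ q ∉ Ma ∧ q ∉ Mb ∧ q ∉ Mc ∧ q ≠ pmE hMa v := by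
  classical
  set I := G.incidenceFinset v with hI
  have hIcard : I.card = 3 := by
    rw [hI, G.card_incidenceFinset_eq_degree]; exact hcubic v
  set p := pmE hMa v with hp
  set c := pmE hMc v with hc
  have hJ : 1 ≤ (I \ {p, c}).card := by
    have h1 : I.card ≤ (I \ {p, c}).card + ({p, c} : Finset (Sym2 V)).card :=
      Finset.card_le_card_sdiff_add_card
    have h2 : ({p, c} : Finset (Sym2 V)).card ≤ 2 := Finset.card_insert_le _ _ |>.trans (by simp)
    omega
  have hpos : 0 < (I \ {p, c}).card := hJ
  obtain ⟨q, hq⟩ := Finset.card_pos.1 hpos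
  obtain ⟨hqI, hqn⟩ := Finset.mem_sdiff.1 hq
  simp only [Finset.mem_insert, Finset.mem_singleton, not_or] at hqn
  obtain ⟨hqp, hqc⟩ := hqn
  rw [SimpleGraph.mem_incidenceFinset] at hqI
  obtain ⟨hqe, hqv⟩ := hqI
  refine ⟨q, hqe, hqv, ?_, ?_, ?_, hqp⟩
  · intro hqa; exact hqp (pmE_eq hMa hqa hqv ▸ rfl)
  · intro hqb
    have : q = pmE hMb v := pmE_eq hMb hqb hqv
    have hpb : p = pmE hMb v := pmE_eq hMb h (hp ▸ pmE_self hMa v)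
    exact hqp (this.trans hpb.symm)
  · intro hqc'; exact hqc (pmE_eq hMc hqc' hqv)

/-- The crucial exclusion lemma: an uncovered edge `e` cannot simultaneously be the unique
uncovered edge of an odd component of `G − Ma` and of an odd component of `G − Mb`. -/
lemma not_both_oddUnique (hcubic : ∀ v : V, G.degree v = 3)
    (hMa : IsPerfectMatchingSet G Ma) (hMb : IsPerfectMatchingSet G Mb)
    (hMc : IsPerfectMatchingSet G Mc) {e : Sym2 V}
    (he : e ∈ G.edgeSet) (hea : e ∉ Ma) (heb : e ∉ Mb) (hec : e ∉ Mc)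
    {x0 : V} (hx0 : x0 ∈ e)
    (hodda : Odd (Nat.card ((G.deleteEdges (↑Ma : Set (Sym2 V))).connectedComponentMk x0).supp))
    (huniqa : ∀ e' : Sym2 V, e' ∈ G.edgeSet → e' ∉ Ma → e' ∉ Mb → e' ∉ Mc →
      ∀ z ∈ e', (G.deleteEdges (↑Ma : Set (Sym2 V))).connectedComponentMk z =
        (G.deleteEdges (↑Ma : Set (Sym2 V))).connectedComponentMk x0 → e' = e)
    (hoddb : Odd (Nat.card ((G.deleteEdges (↑Mb : Set (Sym2 V))).connectedComponentMk x0).supp))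
    (huniqb : ∀ e' : Sym2 V, e' ∈ G.edgeSet → e' ∉ Ma → e' ∉ Mb → e' ∉ Mc →
      ∀ z ∈ e', (G.deleteEdges (↑Mb : Set (Sym2 V))).connectedComponentMk z =
        (G.deleteEdges (↑Mb : Set (Sym2 V))).connectedComponentMk x0 → e' = e) : False := by
  classical
  -- notation
  set Fa := G.deleteEdges (↑Ma : Set (Sym2 V)) with hFa
  set Fb := G.deleteEdges (↑Mb : Set (Sym2 V)) with hFb
  -- For any vertex on the a-component of e whose Ma-edge is multiply covered,
  -- that vertex must lie on e.
  have key_a : ∀ w : V, Fa.connectedComponentMk w = Fa.connectedComponentMk x0 →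
      pmE hMa w ∈ Mb ∨ pmE hMa w ∈ Mc → w ∈ e := by
    intro w hw hcov
    rcases hcov with hcov | hcov
    · obtain ⟨q, hqe, hqv, hqa, hqb, hqc, _⟩ := exists_uncovered_at hcubic hMa hMb hMc hcov
      have : q = e := huniqa q hqe hqa hqb hqc w hqv hw
      exact this ▸ hqv
    · obtain ⟨q, hqe, hqv, hqa, hqc, hqb, _⟩ := exists_uncovered_at hcubic hMa hMc hMb hcov
      have : q = e := huniqa q hqe hqa hqb hqc w hqv hw
      exact this ▸ hqv
  -- the "no triply covered pendant on the a-component" fact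
  have no_triple : ∀ w : V, Fa.connectedComponentMk w = Fa.connectedComponentMk x0 →
      pmE hMa w ∈ Mb → pmE hMa w ∈ Mc → False := by
    intro w hw hwb hwc
    -- both non-pendant incident edges at w are uncovered, and both equal e: contradiction.
    have hwe : w ∈ e := key_a w hw (Or.inl hwb)
    set I := G.incidenceFinset w with hI
    have hIcard : I.card = 3 := by
      rw [hI, G.card_incidenceFinset_eq_degree]; exact hcubic w
    set p := pmE hMa w with hp
    have hpI : p ∈ I := by
      rw [hI, SimpleGraph.mem_incidenceFinset]
      exact ⟨pmE_edge hMa w, pmE_self hMa w⟩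
    have hJcard : (I \ {p}).card = 2 := by
      rw [Finset.card_sdiff_of_subset (Finset.singleton_subset_iff.2 hpI)]; simp [hIcard]
    have hJe : I \ {p} ⊆ {e} := by
      intro q hq
      obtain ⟨hqI, hqp⟩ := Finset.mem_sdiff.1 hq
      simp only [Finset.mem_singleton] at hqp
      rw [SimpleGraph.mem_incidenceFinset] at hqI
      obtain ⟨hqe, hqv⟩ := hqI
      have hqa : q ∉ Ma := fun hc => hqp (pmE_eq hMa hc hqv)
      have hqb : q ∉ Mb := fun hc => hqp ((pmE_eq hMb hc hqv).trans (pmE_eq hMb hwb (pmE_self hMa w)).symm)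
      have hqc : q ∉ Mc := fun hc => hqp ((pmE_eq hMc hc hqv).trans (pmE_eq hMc hwc (pmE_self hMa w)).symm)
      simp only [Finset.mem_singleton]
      exact huniqa q hqe hqa hqb hqc w hqv hw
    have := Finset.card_le_card hJe
    simp [hJcard] at this
  -- find x in S_b(Ca) and y in S_c(Ca)
  obtain ⟨x, hxC, hxS⟩ := exists_S hMa hMb (Fa.connectedComponentMk x0) hodda
  have hxb : pmE hMa x ∈ Mb := by
    have := pmE_eq hMa hxS (pmE_self hMb x)
    rw [← this]; exact pmE_mem hMb x
  have hxe : x ∈ e := key_a x hxC (Or.inl hxb)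
  have hxnc : pmE hMa x ∉ Mc := fun hc => no_triple x hxC hxb hc
  obtain ⟨y, hyC, hyS⟩ := exists_S hMa hMc (Fa.connectedComponentMk x0) hodda
  have hyc : pmE hMa y ∈ Mc := by
    have := pmE_eq hMa hyS (pmE_self hMc y)
    rw [← this]; exact pmE_mem hMc y
  have hye : y ∈ e := key_a y hyC (Or.inr hyc)
  have hynb : pmE hMa y ∉ Mb := fun hb => no_triple y hyC hb hyc
  have hxy : x ≠ y := by
    rintro rfl; exact hxnc hyc
  -- e = s(x, y): every z ∈ e is x or y
  have hmem_e : ∀ z : V, z ∈ e → z = x ∨ z = y := by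
    intro z hz
    have hxother : e = s(x, Sym2.Mem.other' hxe) := (Sym2.other_spec' hxe).symm
    have hy' : y = Sym2.Mem.other' hxe := by
      have := hye
      rw [hxother, Sym2.mem_iff] at this
      rcases this with h | h
      · exact absurd h.symm hxy
      · exact h
    have := hz
    rw [hxother, Sym2.mem_iff] at this
    rcases this with h | h
    · exact Or.inl h
    · exact Or.inr (h.trans hy'.symm)
  -- x's Mb-edge is p := pmE hMa x, not in Mc
  have hxMb : pmE hMb x = pmE hMa x := (pmE_eq hMb hxb (pmE_self hMa x)).symm
  -- y's Mb-edge b' is not in Mc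
  have hyMbnc : pmE hMb y ∉ Mc := by
    intro hc
    have h1 : pmE hMb y = pmE hMc y := pmE_eq hMc hc (pmE_self hMb y)
    have h2 : pmE hMa y = pmE hMc y := pmE_eq hMc hyc (pmE_self hMa y)
    have : pmE hMa y ∈ Mb := by rw [h2, ← h1]; exact pmE_mem hMb y
    exact hynb this
  -- now work in factor b
  obtain ⟨v, hvC, hvS⟩ := exists_S hMb hMc (Fb.connectedComponentMk x0) hoddb
  have hvb : pmE hMb v ∈ Mc := by
    have := pmE_eq hMb hvS (pmE_self hMc v)
    rw [← this]; exact pmE_mem hMc v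
  obtain ⟨q, hqe, hqv, hqb, hqc, hqa, _⟩ := exists_uncovered_at hcubic hMb hMc hMa hvb
  have hqeq : q = e := huniqb q hqe hqa hqb hqc v hqv hvC
  have hve : v ∈ e := hqeq ▸ hqv
  rcases hmem_e v hve with rfl | rfl
  · rw [hxMb] at hvb; exact hxnc hvb
  · exact hyMbnc hvb


/-- Main counting lemma: `3·oddness ≤ 2·(number of uncovered edges)` for any three
perfect matchings. -/
lemma three_mul_oddness_le {M₁ M₂ M₃ : Finset (Sym2 V)}
    (hcubic : ∀ v : V, G.degree v = 3)
    (h₁ : IsPerfectMatchingSet G M₁) (h₂ : IsPerfectMatchingSet G M₂)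
    (h₃ : IsPerfectMatchingSet G M₃) :
    3 * oddness G ≤ 2 * uncoveredCard G M₁ M₂ M₃ := by
  classical
  set U := G.edgeFinset.filter (fun e => e ∉ M₁ ∧ e ∉ M₂ ∧ e ∉ M₃) with hU
  have hUcard : uncoveredCard G M₁ M₂ M₃ = U.card := by
    rw [uncoveredCard, hU]
  -- the per-factor bound
  have factor : ∀ (Ma Mb Mc : Finset (Sym2 V)), IsPerfectMatchingSet G Ma →
      IsPerfectMatchingSet G Mb → IsPerfectMatchingSet G Mc →
      (∀ e : Sym2 V, e ∈ U ↔ e ∈ G.edgeSet ∧ e ∉ Ma ∧ e ∉ Mb ∧ e ∉ Mc) →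
      2 * oddComponentsCount (G.deleteEdges (↑Ma : Set (Sym2 V))) ≤
        (U.filter (fun e => Odd (Nat.card
          ((G.deleteEdges (↑Ma : Set (Sym2 V))).connectedComponentMk e.out.1).supp))).card +
        (U.filter (fun e => Odd (Nat.card
          ((G.deleteEdges (↑Ma : Set (Sym2 V))).connectedComponentMk e.out.1).supp) ∧
          ∀ e' ∈ U, (G.deleteEdges (↑Ma : Set (Sym2 V))).connectedComponentMk e'.out.1 =
            (G.deleteEdges (↑Ma : Set (Sym2 V))).connectedComponentMk e.out.1 → e' = e)).card := by
    intro Ma Mb Mc hMa hMb hMc hUmem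
    set F := G.deleteEdges (↑Ma : Set (Sym2 V)) with hF
    letI : Fintype F.ConnectedComponent := Fintype.ofFinite _
    set host : Sym2 V → F.ConnectedComponent := fun e => F.connectedComponentMk e.out.1 with hhost
    set OC := (univ : Finset F.ConnectedComponent).filter (fun c => Odd (Nat.card c.supp))
      with hOC
    have hoc : oddComponentsCount F = OC.card := by
      rw [oddComponentsCount, Nat.card_eq_fintype_card, hOC]
      convert Fintype.card_subtype _
    have host_eq : ∀ e ∈ U, ∀ z ∈ e, F.connectedComponentMk z = host e := by
      intro e heU z hz
      obtain ⟨hee, hema, _, _⟩ := (hUmem e).1 heU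
      exact mk_eq_of_mem_edge hee hema hz (Sym2.out_fst_mem e)
    -- every odd component contains an uncovered edge
    have step1 : ∀ C ∈ OC, (U.filter (fun e => host e = C)).Nonempty := by
      intro C hC
      have hodd : Odd (Nat.card C.supp) := (Finset.mem_filter.1 hC).2
      obtain ⟨x, hxC, hxS⟩ := exists_S hMa hMb C hodd
      have hxb : pmE hMa x ∈ Mb := by
        have h := pmE_eq hMa hxS (pmE_self hMb x)
        rw [← h]; exact pmE_mem hMb x
      obtain ⟨q, hqe, hqv, hqa, hqb, hqc, _⟩ := exists_uncovered_at hcubic hMa hMb hMc hxb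
      have hqU : q ∈ U := (hUmem q).2 ⟨hqe, hqa, hqb, hqc⟩
      refine ⟨q, Finset.mem_filter.2 ⟨hqU, ?_⟩⟩
      rw [← host_eq q hqU x hqv]; exact hxC
    -- the fiberwise sums
    have hsum1 : ∑ C ∈ OC, (U.filter (fun e => host e = C)).card =
        (U.filter (fun e => host e ∈ OC)).card :=
      Finset.sum_card_fiberwise_eq_card_filter U OC host
    have hsum2 : ∑ C ∈ OC, (if (U.filter (fun e => host e = C)).card = 1 then 1 else 0) =
        (OC.filter (fun C => (U.filter (fun e => host e = C)).card = 1)).card :=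
      (Finset.card_filter _ _).symm
    have hpoint : ∀ C ∈ OC, 2 ≤ (U.filter (fun e => host e = C)).card +
        (if (U.filter (fun e => host e = C)).card = 1 then 1 else 0) := by
      intro C hC
      have h1 : 1 ≤ (U.filter (fun e => host e = C)).card :=
        Finset.card_pos.2 (step1 C hC)
      split_ifs with h
      · omega
      · omega
    have hmain : 2 * OC.card ≤ (U.filter (fun e => host e ∈ OC)).card +
        (OC.filter (fun C => (U.filter (fun e => host e = C)).card = 1)).card := by
      rw [← hsum1, ← hsum2, ← Finset.sum_add_distrib]
      calc 2 * OC.card = ∑ _C ∈ OC, 2 := by rw [Finset.sum_const, smul_eq_mul, mul_comm]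
      _ ≤ _ := Finset.sum_le_sum hpoint
    -- the image bound for unique fibers
    have himg : (OC.filter (fun C => (U.filter (fun e => host e = C)).card = 1)) ⊆
        (U.filter (fun e => Odd (Nat.card (host e).supp) ∧
          ∀ e' ∈ U, host e' = host e → e' = e)).image host := by
      intro C hC
      obtain ⟨hCOC, hone⟩ := Finset.mem_filter.1 hC
      obtain ⟨e, hfe⟩ := Finset.card_eq_one.1 hone
      have heU : e ∈ U ∧ host e = C := by
        have h0 : e ∈ U.filter (fun e => host e = C) := by
          rw [hfe]; exact Finset.mem_singleton_self e
        exact Finset.mem_filter.1 h0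
      refine Finset.mem_image.2 ⟨e, Finset.mem_filter.2 ⟨heU.1, ⟨?_, ?_⟩⟩, heU.2⟩
      · rw [heU.2]; exact (Finset.mem_filter.1 hCOC).2
      · intro e' he'U hhe
        have h0 : e' ∈ U.filter (fun e => host e = C) :=
          Finset.mem_filter.2 ⟨he'U, by rw [hhe, heU.2]⟩
        rw [hfe] at h0; exact Finset.mem_singleton.1 h0
    have hAle : (OC.filter (fun C => (U.filter (fun e => host e = C)).card = 1)).card ≤
        (U.filter (fun e => Odd (Nat.card (host e).supp) ∧
          ∀ e' ∈ U, host e' = host e → e' = e)).card :=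
      (Finset.card_le_card himg).trans Finset.card_image_le
    have hPeq : U.filter (fun e => host e ∈ OC) =
        U.filter (fun e => Odd (Nat.card (host e).supp)) := by
      apply Finset.filter_congr
      intro e _
      simp [hOC]
    rw [hoc]
    calc 2 * OC.card ≤ _ := hmain
    _ ≤ _ := by
        rw [hPeq] at hmain ⊢
        exact Nat.add_le_add (le_refl _) hAle
  -- disjointness of the "unique uncovered edge of an odd component" sets
  have disj : ∀ (Ma Mb Mc : Finset (Sym2 V)), IsPerfectMatchingSet G Ma →
      IsPerfectMatchingSet G Mb → IsPerfectMatchingSet G Mc →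
      (∀ e : Sym2 V, e ∈ U ↔ e ∈ G.edgeSet ∧ e ∉ Ma ∧ e ∉ Mb ∧ e ∉ Mc) →
      Disjoint
        (U.filter (fun e => Odd (Nat.card
          ((G.deleteEdges (↑Ma : Set (Sym2 V))).connectedComponentMk e.out.1).supp) ∧
          ∀ e' ∈ U, (G.deleteEdges (↑Ma : Set (Sym2 V))).connectedComponentMk e'.out.1 =
            (G.deleteEdges (↑Ma : Set (Sym2 V))).connectedComponentMk e.out.1 → e' = e))
        (U.filter (fun e => Odd (Nat.card
          ((G.deleteEdges (↑Mb : Set (Sym2 V))).connectedComponentMk e.out.1).supp) ∧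
          ∀ e' ∈ U, (G.deleteEdges (↑Mb : Set (Sym2 V))).connectedComponentMk e'.out.1 =
            (G.deleteEdges (↑Mb : Set (Sym2 V))).connectedComponentMk e.out.1 → e' = e)) := by
    intro Ma Mb Mc hMa hMb hMc hUmem
    rw [Finset.disjoint_left]
    intro e he1 he2
    obtain ⟨heU, hodd1, huniq1⟩ := Finset.mem_filter.1 he1
    obtain ⟨-, hodd2, huniq2⟩ := Finset.mem_filter.1 he2
    obtain ⟨heE, hea, heb, hec⟩ := (hUmem e).1 heU
    refine not_both_oddUnique hcubic hMa hMb hMc heE hea heb hec (Sym2.out_fst_mem e)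
      hodd1 ?_ hodd2 ?_
    · intro e' he' ha' hb' hc' z hz hmk
      exact huniq1 e' ((hUmem e').2 ⟨he', ha', hb', hc'⟩)
        ((mk_eq_of_mem_edge he' ha' (Sym2.out_fst_mem e') hz).trans hmk)
    · intro e' he' ha' hb' hc' z hz hmk
      exact huniq2 e' ((hUmem e').2 ⟨he', ha', hb', hc'⟩)
        ((mk_eq_of_mem_edge he' hb' (Sym2.out_fst_mem e') hz).trans hmk)
  -- three pairwise disjoint subsets of U
  have sum3 : ∀ (A B C : Finset (Sym2 V)), A ⊆ U → B ⊆ U → C ⊆ U →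
      Disjoint A B → Disjoint A C → Disjoint B C →
      A.card + B.card + C.card ≤ U.card := by
    intro A B C hA hB hC dAB dAC dBC
    have h1 : (A ∪ B).card = A.card + B.card := Finset.card_union_of_disjoint dAB
    have h2 : ((A ∪ B) ∪ C).card = (A ∪ B).card + C.card :=
      Finset.card_union_of_disjoint (Finset.disjoint_union_left.2 ⟨dAC, dBC⟩)
    have h3 : ((A ∪ B) ∪ C) ⊆ U :=
      Finset.union_subset (Finset.union_subset hA hB) hC
    have := Finset.card_le_card h3
    omega
  -- U-membership characterizations for the three cyclic roles
  have hU1 : ∀ e : Sym2 V, e ∈ U ↔ e ∈ G.edgeSet ∧ e ∉ M₁ ∧ e ∉ M₂ ∧ e ∉ M₃ := by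
    intro e
    rw [hU, Finset.mem_filter, SimpleGraph.mem_edgeFinset]
  have hU2 : ∀ e : Sym2 V, e ∈ U ↔ e ∈ G.edgeSet ∧ e ∉ M₂ ∧ e ∉ M₃ ∧ e ∉ M₁ := by
    intro e; rw [hU1 e]; tauto
  have hU13 : ∀ e : Sym2 V, e ∈ U ↔ e ∈ G.edgeSet ∧ e ∉ M₁ ∧ e ∉ M₃ ∧ e ∉ M₂ := by
    intro e; rw [hU1 e]; tauto
  have hU3 : ∀ e : Sym2 V, e ∈ U ↔ e ∈ G.edgeSet ∧ e ∉ M₃ ∧ e ∉ M₁ ∧ e ∉ M₂ := by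
    intro e; rw [hU1 e]; tauto
  have b1 := factor M₁ M₂ M₃ h₁ h₂ h₃ hU1
  have b2 := factor M₂ M₃ M₁ h₂ h₃ h₁ hU2
  have b3 := factor M₃ M₁ M₂ h₃ h₁ h₂ hU3
  have d12 := disj M₁ M₂ M₃ h₁ h₂ h₃ hU1
  have d13 := disj M₁ M₃ M₂ h₁ h₃ h₂ hU13
  have d23 := disj M₂ M₃ M₁ h₂ h₃ h₁ hU2
  have b1' := b1.trans (Nat.add_le_add_right (Finset.card_filter_le U _) _)
  have b2' := b2.trans (Nat.add_le_add_right (Finset.card_filter_le U _) _)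
  have b3' := b3.trans (Nat.add_le_add_right (Finset.card_filter_le U _) _)
  have hq := sum3 _ _ _ (Finset.filter_subset _ _) (Finset.filter_subset _ _)
    (Finset.filter_subset _ _) d12 d13 d23
  have o1 : oddness G ≤ oddComponentsCount (G.deleteEdges (↑M₁ : Set (Sym2 V))) :=
    Nat.sInf_le ⟨M₁, h₁, rfl⟩
  have o2 : oddness G ≤ oddComponentsCount (G.deleteEdges (↑M₂ : Set (Sym2 V))) :=
    Nat.sInf_le ⟨M₂, h₂, rfl⟩
  have o3 : oddness G ≤ oddComponentsCount (G.deleteEdges (↑M₃ : Set (Sym2 V))) :=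
    Nat.sInf_le ⟨M₃, h₃, rfl⟩
  omega
end Graph

/-- For every bridgeless cubic graph `G`, `df(G) ≥ (3/2)·ω(G)`, i.e.
`2·df(G) ≥ 3·ω(G)`. -/
theorem two_mul_defect_ge_three_mul_oddness
    {V : Type*} [Fintype V] [DecidableEq V]
    (G : SimpleGraph V) [DecidableRel G.Adj]
    (hcubic : ∀ v : V, G.degree v = 3)
    (hbridgeless : ∀ e ∈ G.edgeSet, ¬ G.IsBridge e) :
    3 * oddness G ≤ 2 * defect G := by
  classical
  by_cases hne : {n | ∃ M₁ M₂ M₃ : Finset (Sym2 V), IsPerfectMatchingSet G M₁ ∧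
      IsPerfectMatchingSet G M₂ ∧ IsPerfectMatchingSet G M₃ ∧
      n = uncoveredCard G M₁ M₂ M₃}.Nonempty
  · obtain ⟨M₁, M₂, M₃, h₁, h₂, h₃, hk⟩ := Nat.sInf_mem hne
    rw [defect, hk]
    exact three_mul_oddness_le hcubic h₁ h₂ h₃
  · have hodd0 : oddness G = 0 := by
      rw [oddness]
      by_cases h : {n | ∃ M : Finset (Sym2 V), IsPerfectMatchingSet G M ∧
          n = oddComponentsCount (G.deleteEdges ↑M)}.Nonempty
      · exfalso
        obtain ⟨n, M, hM, -⟩ := h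
        exact hne ⟨uncoveredCard G M M M, M, M, M, hM, hM, hM, rfl⟩
      · rw [Set.not_nonempty_iff_eq_empty.1 h, Nat.sInf_empty]
    rw [hodd0]
    simp
end

section
/- For every snark G, df(G) ≥ ⌈girth(G)/2⌉: any triple of perfect matchings of G leaves at least ⌈girth(G)/2⌉ edges uncovered. -/
open SimpleGraph Finset

/-!
Let `c(e)` be the number of the three matchings containing the edge `e`. At every vertex the
three incident edges have counts summing to `3`, so a vertex meeting an edge with `c ≠ 1` also
meets an uncovered edge and a second edge with `c ≠ 1`. Hence the core (the edges with `c ≠ 1`)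
has minimum degree at least two on its support, and it is nonempty because a snark has no
3-edge-colouring; so it contains a circuit, of length at least the girth. Every vertex of that
circuit lies on an uncovered edge, and an edge has only two ends.
-/

theorem Finset.exists_eq_zero_and_exists_two_le_of_sum_eq_card {α : Type*} {s : Finset α}
    {f : α → ℕ} (hsum : ∑ x ∈ s, f x = #s) {x : α} (hx : x ∈ s) (hfx : f x ≠ 1) :
    (∃ y ∈ s, f y = 0) ∧ ∃ z ∈ s, 2 ≤ f z := by
  have hzero : ∃ y ∈ s, f y = 0 := by
    by_contra! hpos
    have : ∑ _ ∈ s, 1 < ∑ x ∈ s, f x :=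
      Finset.sum_lt_sum (fun y hy => Nat.one_le_iff_ne_zero.mpr (hpos y hy))
        ⟨x, hx, by have := hpos x hx; omega⟩
    simp [hsum] at this
  refine ⟨hzero, ?_⟩
  by_contra! hle
  obtain ⟨y, hy, hfy⟩ := hzero
  have : ∑ x ∈ s, f x < ∑ _ ∈ s, 1 :=
    Finset.sum_lt_sum (fun z hz => Nat.le_of_lt_succ (hle z hz)) ⟨y, hy, by omega⟩
  simp [hsum] at this

theorem Finset.card_le_two_mul_card_of_forall_exists_mem {V : Type*} [DecidableEq V]
    (C : Finset V) (U : Finset (Sym2 V)) (h : ∀ v ∈ C, ∃ e ∈ U, v ∈ e) :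
    #C ≤ 2 * #U := by
  have := Finset.card_mul_le_card_mul (fun v e => v ∈ e) (s := C) (t := U) (m := 1)
    (n := 2)
    (fun v hv => Finset.card_pos.mpr <| by
      simpa [Finset.bipartiteAbove, Finset.filter_nonempty_iff] using h v hv)
    (fun e _ => by
      induction e using Sym2.ind with
      | _ x y =>
        calc #(C.bipartiteBelow (fun v e => v ∈ e) s(x, y)) ≤ #({x, y} : Finset V) :=
              Finset.card_le_card fun v hv => by simp_all [Finset.bipartiteBelow]
          _ ≤ 2 := Finset.card_le_two)
  simpa [mul_comm] using this

namespace SimpleGraph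

variable {V : Type*}

theorem Walk.mem_support_of_not_nil {H : SimpleGraph V} {u v w : V} {p : H.Walk u v}
    (hp : ¬ p.Nil) (hw : w ∈ p.support) : w ∈ H.support := by
  obtain ⟨e, he, hwe⟩ := (mem_support_iff_exists_mem_edges_of_not_nil hp).mp hw
  obtain ⟨x, rfl⟩ := Sym2.mem_iff_exists.mp hwe
  exact ⟨x, p.adj_of_mem_edges he⟩

theorem Walk.IsCycle.card_toFinset_tail_support [DecidableEq V] {H : SimpleGraph V} {u : V}
    {c : H.Walk u u} (hc : c.IsCycle) : #c.support.tail.toFinset = c.length := by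
  rw [List.toFinset_card_of_nodup hc.support_nodup, List.length_tail, Walk.length_support]
  rfl

theorem not_isAcyclic_of_forall_exists_ne_adj [Fintype V] {H : SimpleGraph V}
    (h : ∀ v x, H.Adj v x → ∃ y ≠ x, H.Adj v y) {u w : V} (huw : H.Adj u w) :
    ¬ H.IsAcyclic := by
  intro hacyc
  have long_path :
      ∀ n, ∃ (a b : V) (p : H.Walk a b), p.IsPath ∧ ¬ p.Nil ∧ n ≤ p.length := by
    intro n
    induction n with
    | zero => exact ⟨u, w, huw.toWalk, Walk.IsPath.of_adj huw, by simp, by simp⟩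
    | succ n ih =>
      obtain ⟨a, b, p, hp, hnil, hn⟩ := ih
      obtain ⟨y, hy, hay⟩ := h a p.snd (p.adj_snd hnil)
      have hys : y ∉ p.support := fun hmem => hy (hacyc.eq_snd_of_adj_start hp hay hmem)
      exact ⟨y, b, .cons hay.symm p, hp.cons hys, by simp, by simp; omega⟩
  obtain ⟨a, b, p, hp, -, hlen⟩ := long_path (Fintype.card V)
  exact absurd hp.length_lt (by omega)

end SimpleGraph

namespace IsPerfectMatchingSet

variable {V : Type*} {G : SimpleGraph V} {M : Finset (Sym2 V)}

theorem eq_of_mem (hM : IsPerfectMatchingSet G M) {v : V} {e f : Sym2 V} (he : e ∈ M)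
    (hve : v ∈ e) (hf : f ∈ M) (hvf : v ∈ f) : e = f :=
  (hM.2 v).unique ⟨he, hve⟩ ⟨hf, hvf⟩

theorem card_filter_neighborFinset [DecidableEq V] [G.LocallyFinite]
    (hM : IsPerfectMatchingSet G M) (v : V) :
    #{w ∈ G.neighborFinset v | s(v, w) ∈ M} = 1 := by
  obtain ⟨e, ⟨he, hve⟩, -⟩ := hM.2 v
  obtain ⟨w, rfl⟩ := Sym2.mem_iff_exists.mp hve
  refine Finset.card_eq_one.mpr ⟨w, Finset.ext fun y => ?_⟩
  simp only [Finset.mem_filter, mem_neighborFinset, Finset.mem_singleton]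
  constructor
  · rintro ⟨-, hy⟩
    exact Sym2.congr_right.mp (hM.eq_of_mem (v := v) hy (by simp) he (by simp))
  · rintro rfl
    exact ⟨hM.1 he, he⟩

end IsPerfectMatchingSet

theorem isProper3EdgeColoring_of_forall_exists_mem {V : Type*} {G : SimpleGraph V}
    {M : Fin 3 → Finset (Sym2 V)} (hM : ∀ i, IsPerfectMatchingSet G (M i))
    (hcov : ∀ e ∈ G.edgeSet, ∃ i, e ∈ M i) :
    ∃ c : Sym2 V → Fin 3, IsProper3EdgeColoring G c := by
  classical
  refine ⟨fun e => if h : ∃ i, e ∈ M i then h.choose else 0, ?_⟩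
  intro v e f he hf hve hvf hef hc
  simp only [dif_pos (hcov e he), dif_pos (hcov f hf)] at hc
  have hfM := (hcov f hf).choose_spec
  rw [← hc] at hfM
  exact hef ((hM _).eq_of_mem (hcov e he).choose_spec hve hfM hvf)

section Cover

variable {V ι : Type*} [DecidableEq V] [Fintype ι] {G : SimpleGraph V}
  {M : ι → Finset (Sym2 V)}

def coverCount (M : ι → Finset (Sym2 V)) (e : Sym2 V) : ℕ :=
  #{i | e ∈ M i}

theorem coverCount_eq_zero_iff {e : Sym2 V} : coverCount M e = 0 ↔ ∀ i, e ∉ M i := by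
  simp [coverCount, Finset.filter_eq_empty_iff]

theorem sum_coverCount_neighborFinset [G.LocallyFinite]
    (hM : ∀ i, IsPerfectMatchingSet G (M i)) (v : V) :
    ∑ w ∈ G.neighborFinset v, coverCount M s(v, w) = Fintype.card ι := by
  simp only [coverCount, Finset.card_filter]
  rw [Finset.sum_comm]
  simp [(hM _).card_filter_neighborFinset]

def coreGraph (G : SimpleGraph V) (M : ι → Finset (Sym2 V)) : SimpleGraph V :=
  G.deleteEdges {e | coverCount M e = 1}

theorem coreGraph_adj {v w : V} :
    (coreGraph G M).Adj v w ↔ G.Adj v w ∧ coverCount M s(v, w) ≠ 1 := by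
  simp [coreGraph]

theorem coreGraph_le : coreGraph G M ≤ G :=
  deleteEdges_le _

theorem exists_coverCount_eq_zero_and_exists_two_le_of_coreGraph_adj [G.LocallyFinite]
    (hreg : G.IsRegularOfDegree (Fintype.card ι)) (hM : ∀ i, IsPerfectMatchingSet G (M i))
    {v x : V} (hvx : (coreGraph G M).Adj v x) :
    (∃ y, G.Adj v y ∧ coverCount M s(v, y) = 0) ∧
      ∃ z, G.Adj v z ∧ 2 ≤ coverCount M s(v, z) := by
  rw [coreGraph_adj] at hvx
  have hsum := sum_coverCount_neighborFinset hM v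
  rw [← hreg v, ← card_neighborFinset_eq_degree] at hsum
  simpa using Finset.exists_eq_zero_and_exists_two_le_of_sum_eq_card hsum
    ((mem_neighborFinset G v x).mpr hvx.1) hvx.2

theorem coreGraph_exists_ne_adj [G.LocallyFinite]
    (hreg : G.IsRegularOfDegree (Fintype.card ι)) (hM : ∀ i, IsPerfectMatchingSet G (M i))
    {v x : V} (hvx : (coreGraph G M).Adj v x) : ∃ y ≠ x, (coreGraph G M).Adj v y := by
  obtain ⟨⟨y, hy, hy0⟩, z, hz, hz2⟩ :=
    exists_coverCount_eq_zero_and_exists_two_le_of_coreGraph_adj hreg hM hvx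
  have hyc : (coreGraph G M).Adj v y := coreGraph_adj.mpr ⟨hy, by omega⟩
  have hzc : (coreGraph G M).Adj v z := coreGraph_adj.mpr ⟨hz, by omega⟩
  by_cases hyx : y = x
  · subst hyx
    exact ⟨z, by rintro rfl; omega, hzc⟩
  · exact ⟨y, hyx, hyc⟩

theorem coreGraph_not_isAcyclic [Fintype V] [G.LocallyFinite]
    (hreg : G.IsRegularOfDegree (Fintype.card ι)) (hM : ∀ i, IsPerfectMatchingSet G (M i))
    {u w : V} (huw : G.Adj u w) (huw0 : coverCount M s(u, w) = 0) :
    ¬ (coreGraph G M).IsAcyclic :=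
  not_isAcyclic_of_forall_exists_ne_adj (fun _ _ => coreGraph_exists_ne_adj hreg hM)
    (coreGraph_adj.mpr ⟨huw, by omega⟩)

theorem length_le_two_mul_card_uncovered_of_isCycle [Fintype V] [DecidableRel G.Adj]
    (hreg : G.IsRegularOfDegree (Fintype.card ι)) (hM : ∀ i, IsPerfectMatchingSet G (M i))
    {a : V} {c : (coreGraph G M).Walk a a} (hc : c.IsCycle) :
    c.length ≤ 2 * #{e ∈ G.edgeFinset | coverCount M e = 0} := by
  rw [← hc.card_toFinset_tail_support]
  refine Finset.card_le_two_mul_card_of_forall_exists_mem _ _ fun v hv => ?_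
  obtain ⟨x, hvx⟩ := c.mem_support_of_not_nil hc.not_nil
    (List.mem_of_mem_tail (List.mem_toFinset.mp hv))
  obtain ⟨⟨y, hy, hy0⟩, -⟩ :=
    exists_coverCount_eq_zero_and_exists_two_le_of_coreGraph_adj hreg hM hvx
  exact ⟨s(v, y), by simp [hy, hy0], by simp⟩

end Cover

/-- For every snark `G` with finite girth `g`, any triple of perfect matchings leaves at
least `⌈g/2⌉` edges uncovered; hence `df(G) ≥ ⌈girth(G)/2⌉`. -/
theorem defect_ge_half_girth
    {V : Type*} [Fintype V] [DecidableEq V]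
    (G : SimpleGraph V) [DecidableRel G.Adj]
    (hsnark : IsSnark G)
    (g : ℕ) (hg : G.girth = (g : ℕ∞))
    (M₁ M₂ M₃ : Finset (Sym2 V))
    (h₁ : IsPerfectMatchingSet G M₁) (h₂ : IsPerfectMatchingSet G M₂)
    (h₃ : IsPerfectMatchingSet G M₃) :
    (g + 1) / 2 ≤ uncoveredCard G M₁ M₂ M₃ := by
  obtain ⟨hdeg, -, -, hnc⟩ := hsnark
  set M : Fin 3 → Finset (Sym2 V) := ![M₁, M₂, M₃]
  have hM : ∀ i, IsPerfectMatchingSet G (M i) := by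
    intro i
    fin_cases i <;> assumption
  have hreg : G.IsRegularOfDegree (Fintype.card (Fin 3)) := fun v => by simpa using hdeg v
  have hU : uncoveredCard G M₁ M₂ M₃ = #{e ∈ G.edgeFinset | coverCount M e = 0} := by
    simp [uncoveredCard, coverCount_eq_zero_iff, Fin.forall_fin_succ, M]
  obtain ⟨u, w, huw, huw0⟩ : ∃ u w, G.Adj u w ∧ coverCount M s(u, w) = 0 := by
    by_contra! h
    refine hnc (isProper3EdgeColoring_of_forall_exists_mem hM (Sym2.ind fun u w huw => ?_))
    simpa [coverCount_eq_zero_iff] using h u w huw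
  obtain ⟨a, c, hc⟩ : ∃ a, ∃ c : (coreGraph G M).Walk a a, c.IsCycle := by
    simpa [IsAcyclic] using coreGraph_not_isAcyclic hreg hM huw huw0
  have hgc : g ≤ c.length := by
    have := girth_le_length ((Walk.isCycle_mapLe coreGraph_le).mpr hc)
    rwa [Walk.length_map, Nat.cast_inj.mp hg] at this
  have := length_le_two_mul_card_uncovered_of_isCycle hreg hM hc
  omega
end

section
/- Let G be a connected cubic graph other than K_4, K_{3,3}, and the theta graph on two vertices, and let C be a shortest circuit of G. Then the set of edges with exactly one end on C is a cycle-separating edge cut of G, i.e., both G − V(C) and C contain circuits after the cut is removed; in particular G − V(C) contains a circuit. -/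
/-!
A shortest cycle `C`, of length `g`, has no chords, so in a cubic graph on `n` vertices every
vertex of `C` sends exactly one edge out of `C`, and counting degrees, `G - V(C)` has
`n - g` vertices and `(3 (n - g) - g) / 2` edges. A forest has fewer edges than vertices, so
`G - V(C)` contains a cycle as soon as `2 g ≤ n + 1`.
For `g ≥ 5` no vertex outside `C` has two neighbours on `C` (with the shorter arc between them it
would close a cycle shorter than `C`), so the `g` edges leaving `C` end in distinct vertices and
`g ≤ n - g`. For `g = 3` the bound only excludes `n = 4`, that is `K₄`; for `g = 4` it excludes
`n = 6`, and a triangle-free cubic graph on six vertices is `K₃,₃`.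
-/

open Finset

namespace SimpleGraph

variable {V : Type*} {G : SimpleGraph V}

lemma girth_le_length_add_length {u v : V} {p q : G.Walk u v} (hp : p.IsPath) (hq : q.IsPath)
    (hpq : p ≠ q) : G.girth ≤ p.length + q.length := by
  obtain ⟨_, -, -, c, hc, hlen⟩ := hp.exists_isCycle_length_le_add_of_ne hq hpq
  exact (girth_le_length hc).trans hlen

lemma cliqueFree_three_of_three_lt_girth (h : 3 < G.girth) : G.CliqueFree 3 := by
  intro s hs
  obtain ⟨u, w, hw, hlen⟩ := is3Clique_iff_exists_cycle_length_three.mp ⟨s, hs⟩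
  have := girth_le_length hw
  omega

lemma IsAcyclic.card_edgeFinset_lt [Fintype V] [Nonempty V] [Fintype G.edgeSet]
    (hG : G.IsAcyclic) : #G.edgeFinset < Fintype.card V := by
  classical
  obtain ⟨T, hGT, -, hT⟩ :=
    (connected_top (V := V)).exists_isTree_le_of_le_of_isAcyclic le_top hG
  have := hT.card_edgeFinset
  have := card_le_card (edgeFinset_subset_edgeFinset.mpr hGT)
  omega

namespace Walk

variable [DecidableEq V] {u x y : V} {c : G.Walk u u}

/-- Each of the two arcs of `c` from `u` to `y`, together with `q`, contains a cycle. -/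
lemma IsCycle.two_mul_girth_le (hc : c.IsCycle) (hy : y ∈ c.support) {q : G.Walk u y}
    (hq : q.IsPath) {e : Sym2 V} (he : e ∈ q.edges) (hec : e ∉ c.edges) :
    2 * G.girth ≤ c.length + 2 * q.length := by
  obtain rfl | hyu := eq_or_ne y u
  · simp [eq_nil_iff_nil.mpr (isPath_iff_nil.mp hq)] at he
  have hspec : (c.takeUntil y hy).append (c.dropUntil y hy) = c := c.take_spec hy
  have hp₁ : (c.takeUntil y hy).IsPath := hc.isPath_takeUntil hy
  have hp₂ : (c.dropUntil y hy).reverse.IsPath := by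
    rw [← hspec] at hc
    exact (hc.isPath_of_append_right (not_nil_of_ne hyu.symm)).reverse
  have hlen : (c.takeUntil y hy).length + (c.dropUntil y hy).length = c.length := by
    rw [← length_append, hspec]
  have hne₁ : c.takeUntil y hy ≠ q := by
    rintro rfl
    exact hec (c.edges_takeUntil_subset_edges hy he)
  have hne₂ : (c.dropUntil y hy).reverse ≠ q := by
    rintro rfl
    exact hec (c.edges_dropUntil_subset_edges hy (by simpa using he))
  have h₁ := girth_le_length_add_length hp₁ hq hne₁
  have h₂ := girth_le_length_add_length hp₂ hq hne₂
  rw [length_reverse] at h₂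
  omega

lemma IsCycle.two_mul_girth_le_of_mem_support (hc : c.IsCycle) (hx : x ∈ c.support)
    (hy : y ∈ c.support) {q : G.Walk x y} (hq : q.IsPath) {e : Sym2 V} (he : e ∈ q.edges)
    (hec : e ∉ c.edges) : 2 * G.girth ≤ c.length + 2 * q.length := by
  simpa using (hc.rotate hx).two_mul_girth_le ((c.mem_support_rotate_iff x hx).2 hy) hq he
    (fun h => hec ((c.rotate_edges x hx).mem_iff.1 h))

lemma IsCycle.mem_edges_of_adj (hc : c.IsCycle) (hmin : c.length ≤ G.girth)
    (hx : x ∈ c.support) (hy : y ∈ c.support) (hxy : G.Adj x y) : s(x, y) ∈ c.edges := by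
  by_contra hxyc
  have h := hc.two_mul_girth_le_of_mem_support hx hy hxy.isPath_toWalk (by simp) hxyc
  rw [Adj.length_toWalk] at h
  have := hc.three_le_length
  omega

lemma IsCycle.length_le_four_of_adj_of_adj {v : V} (hc : c.IsCycle) (hmin : c.length ≤ G.girth)
    (hv : v ∉ c.support) (hx : x ∈ c.support) (hy : y ∈ c.support) (hxy : x ≠ y)
    (hvx : G.Adj v x) (hvy : G.Adj v y) : c.length ≤ 4 := by
  have hq : (cons hvx.symm hvy.toWalk).IsPath := by
    simp [cons_isPath_iff, hvx.ne.symm, hxy, hvy.isPath_toWalk]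
  have := hc.two_mul_girth_le_of_mem_support hx hy hq (e := s(x, v)) (by simp)
    (fun h => hv (c.snd_mem_support_of_mem_edges h))
  simp only [length_cons, length_nil] at this
  omega

lemma toFinset_setOf_notMem_support [Fintype V] {v : V} (p : G.Walk u v) :
    {x | x ∉ p.support}.toFinset = p.support.toFinsetᶜ := by
  ext
  simp

lemma IsCycle.card_support_toFinset (hc : c.IsCycle) : #c.support.toFinset = c.length := by
  rw [← c.cons_tail_support, List.toFinset_cons,
    insert_eq_of_mem (List.mem_toFinset.mpr (c.end_mem_tail_support hc.not_nil)),
    List.toFinset_card_of_nodup hc.support_nodup, List.length_tail, length_support,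
    Nat.add_sub_cancel]

end Walk

section Finite

variable [Fintype V] [DecidableRel G.Adj]

lemma IsRegularOfDegree.nonempty_iso_top {n : ℕ} (hG : G.IsRegularOfDegree n)
    (hV : Fintype.card V = n + 1) : Nonempty (G ≃g (⊤ : SimpleGraph (Fin (n + 1)))) := by
  obtain rfl : G = ⊤ := by
    ext a b
    refine ⟨Adj.ne, fun hab => (G.degree_eq_card_sub_one a).mp ?_ hab⟩
    rw [hG a, hV, Nat.add_sub_cancel]
  exact ⟨Iso.completeGraph (Fintype.equivFinOfCardEq hV)⟩

lemma degree_induce (t : Set V) [DecidablePred (· ∈ t)] (v : t) :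
    (G.induce t).degree v = #{y ∈ G.neighborFinset v | y ∈ t} := by
  rw [← card_neighborFinset_eq_degree, ← card_map (Function.Embedding.subtype _)]
  congr 1
  ext y
  simp

lemma sum_degree_eq_two_mul_card_edgeFinset_induce_add (t : Set V) [DecidablePred (· ∈ t)] :
    ∑ y ∈ t.toFinset, G.degree y = 2 * #(G.induce t).edgeFinset +
      ∑ y ∈ t.toFinset, #{x ∈ G.neighborFinset y | x ∉ t} := by
  have hinside : ∑ y ∈ t.toFinset, #{x ∈ G.neighborFinset y | x ∈ t} =
      2 * #(G.induce t).edgeFinset := by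
    rw [← sum_degrees_eq_twice_card_edges,
      sum_subtype (F := inferInstance) _ fun _ => Set.mem_toFinset]
    simp_rw [degree_induce]
  rw [← hinside, ← sum_add_distrib]
  refine sum_congr rfl fun y _ => ?_
  rw [card_filter_add_card_filter_not, card_neighborFinset_eq_degree]

variable [DecidableEq V] {k : ℕ}

lemma sum_card_neighborFinset_filter_comm (s t : Finset V) :
    ∑ x ∈ s, #{y ∈ G.neighborFinset x | y ∈ t} =
      ∑ y ∈ t, #{x ∈ G.neighborFinset y | x ∈ s} := by
  have h := sum_card_bipartiteAbove_eq_sum_card_bipartiteBelow (s := s) (t := t) (r := G.Adj)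
  simp only [bipartiteAbove, bipartiteBelow] at h
  convert h using 3 <;> ext <;> simp [G.adj_comm, and_comm]

lemma IsRegularOfDegree.adj_iff_mem_neighborFinset_iff_notMem (hG : G.IsRegularOfDegree k)
    (h3 : G.CliqueFree 3) (hV : Fintype.card V = 2 * k) (v a b : V) :
    G.Adj a b ↔ (a ∈ G.neighborFinset v ↔ b ∉ G.neighborFinset v) := by
  set A := G.neighborFinset v
  have htriangle : ∀ {x y z}, G.Adj x y → G.Adj x z → ¬ G.Adj y z := fun hxy hxz hyz =>
    h3 {_, _, _} (is3Clique_triple_iff.mpr ⟨hxy, hxz, hyz⟩)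
  have hnbr : ∀ a ∈ A, G.neighborFinset a = Aᶜ := by
    intro a ha
    refine eq_of_subset_of_card_le (fun b hb => ?_) ?_
    · rw [mem_neighborFinset] at ha hb
      exact mem_compl.mpr fun hbA => htriangle ha (mem_neighborFinset _ _ _ |>.mp hbA) hb
    · rw [card_compl, card_neighborFinset_eq_degree, card_neighborFinset_eq_degree, hG v, hG a,
        hV]
      omega
  obtain ⟨a₀, ha₀⟩ : A.Nonempty := by
    rw [← card_pos, card_neighborFinset_eq_degree, hG v]
    have := Fintype.card_pos_iff.mpr ⟨v⟩
    omega
  have hAc : ∀ {a b}, a ∈ A → b ∉ A → G.Adj a b := fun ha hb =>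
    (mem_neighborFinset _ _ _).mp (hnbr _ ha ▸ mem_compl.mpr hb)
  by_cases ha : a ∈ A <;> by_cases hb : b ∈ A <;> simp only [ha, hb, not_true_eq_false,
    not_false_eq_true, iff_true, iff_false]
  · exact htriangle ((mem_neighborFinset _ _ _).mp ha) ((mem_neighborFinset _ _ _).mp hb)
  · exact hAc ha hb
  · exact (hAc hb ha).symm
  · exact htriangle (hAc ha₀ ha) (hAc ha₀ hb)

lemma IsRegularOfDegree.nonempty_iso_completeBipartiteGraph [Nonempty V]
    (hG : G.IsRegularOfDegree k) (h3 : G.CliqueFree 3) (hV : Fintype.card V = 2 * k) :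
    Nonempty (G ≃g completeBipartiteGraph (Fin k) (Fin k)) := by
  obtain ⟨v⟩ := ‹Nonempty V›
  set A := G.neighborFinset v
  have hA : Fintype.card A = k := by
    rw [Fintype.card_coe, card_neighborFinset_eq_degree, hG v]
  have hAc : Fintype.card {a // a ∉ A} = k := by
    rw [Fintype.card_subtype_compl, hA, hV]
    omega
  let e : G ≃g completeBipartiteGraph A {a // a ∉ A} :=
    { toEquiv := (Equiv.sumCompl (· ∈ A)).symm
      map_rel_iff' := fun {a b} => by
        rw [hG.adj_iff_mem_neighborFinset_iff_notMem h3 hV v a b]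
        by_cases ha : G.Adj v a <;> by_cases hb : G.Adj v b <;>
          simp [A, Equiv.sumCompl_symm_apply_of_pos, Equiv.sumCompl_symm_apply_of_neg, ha, hb] }
  exact ⟨e.trans (completeBipartiteGraphCongr (Fintype.equivFinOfCardEq hA)
    (Fintype.equivFinOfCardEq hAc))⟩

namespace Walk

variable {u x : V} {c : G.Walk u u}

lemma IsCycle.card_neighborFinset_filter_mem_support (hc : c.IsCycle)
    (hmin : c.length ≤ G.girth) (hx : x ∈ c.support) :
    #{y ∈ G.neighborFinset x | y ∈ c.support} = 2 := by
  have hnbr :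
      (↑{y ∈ G.neighborFinset x | y ∈ c.support} : Set V) = c.toSubgraph.neighborSet x := by
    ext y
    simp only [coe_filter, mem_neighborFinset, Set.mem_ofPred_eq, Subgraph.mem_neighborSet,
      adj_toSubgraph_iff_mem_edges]
    exact ⟨fun ⟨hxy, hy⟩ => hc.mem_edges_of_adj hmin hx hy hxy,
      fun h => ⟨c.adj_of_mem_edges h, c.snd_mem_support_of_mem_edges h⟩⟩
  rw [← Set.ncard_coe_finset, hnbr, hc.ncard_neighborSet_toSubgraph_eq_two hx]

lemma IsCycle.card_neighborFinset_filter_notMem_support_add_two (hc : c.IsCycle)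
    (hmin : c.length ≤ G.girth) (hx : x ∈ c.support) :
    #{y ∈ G.neighborFinset x | y ∉ c.support} + 2 = G.degree x := by
  rw [← hc.card_neighborFinset_filter_mem_support hmin hx, add_comm,
    card_filter_add_card_filter_not, card_neighborFinset_eq_degree]

lemma IsCycle.sum_card_neighborFinset_filter_mem_support (hG : G.IsRegularOfDegree 3)
    (hc : c.IsCycle) (hmin : c.length ≤ G.girth) :
    ∑ y ∈ c.support.toFinsetᶜ, #{x ∈ G.neighborFinset y | x ∈ c.support} = c.length := by
  have hcomm := G.sum_card_neighborFinset_filter_comm c.support.toFinset c.support.toFinsetᶜ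
  simp only [List.mem_toFinset, mem_compl] at hcomm
  rw [← hcomm, ← hc.card_support_toFinset, card_eq_sum_ones]
  refine sum_congr rfl fun x hx => ?_
  have := hc.card_neighborFinset_filter_notMem_support_add_two hmin (List.mem_toFinset.mp hx)
  rw [hG.degree_eq] at this
  omega

lemma IsCycle.card_neighborFinset_filter_mem_support_le_one {v : V} (hc : c.IsCycle)
    (hmin : c.length ≤ G.girth) (hlen : 4 < c.length) (hv : v ∉ c.support) :
    #{x ∈ G.neighborFinset v | x ∈ c.support} ≤ 1 := by
  refine card_le_one.mpr fun x hx y hy => by_contra fun hxy => ?_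
  simp only [mem_filter, mem_neighborFinset] at hx hy
  have := hc.length_le_four_of_adj_of_adj hmin hv hx.2 hy.2 hxy hx.1 hy.1
  omega

lemma IsCycle.two_mul_length_le_card_add_one (hG : G.IsRegularOfDegree 3)
    (hK4 : ¬ Nonempty (G ≃g (⊤ : SimpleGraph (Fin 4))))
    (hK33 : ¬ Nonempty (G ≃g completeBipartiteGraph (Fin 3) (Fin 3)))
    (hc : c.IsCycle) (hmin : c.length ≤ G.girth) : 2 * c.length ≤ Fintype.card V + 1 := by
  have h3 := hc.three_le_length
  have hn4 : 4 ≤ Fintype.card V := by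
    have := G.degree_lt_card_verts u
    rw [hG.degree_eq] at this
    omega
  have hne4 : Fintype.card V ≠ 4 := fun h => hK4 (hG.nonempty_iso_top h)
  have heven : 3 * Fintype.card V = 2 * #G.edgeFinset := by
    simpa [hG.degree_eq, mul_comm] using G.sum_degrees_eq_twice_card_edges
  rcases le_or_gt c.length 4 with hL | hL
  · have : Nonempty V := ⟨u⟩
    have hne6 : c.length = 4 → Fintype.card V ≠ 6 := fun hL4 h =>
      hK33 (hG.nonempty_iso_completeBipartiteGraph
        (cliqueFree_three_of_three_lt_girth (by omega)) h)
    omega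
  · have hle : ∀ y ∈ c.support.toFinsetᶜ, #{x ∈ G.neighborFinset y | x ∈ c.support} ≤ 1 :=
      fun y hy => hc.card_neighborFinset_filter_mem_support_le_one hmin hL (by simpa using hy)
    have := sum_le_sum hle
    rw [hc.sum_card_neighborFinset_filter_mem_support hG hmin, sum_const, smul_eq_mul, mul_one,
      card_compl, hc.card_support_toFinset] at this
    omega

lemma IsCycle.two_mul_card_edgeFinset_induce_add_length (hG : G.IsRegularOfDegree 3)
    (hc : c.IsCycle) (hmin : c.length ≤ G.girth) :
    2 * #(G.induce {v | v ∉ c.support}).edgeFinset + c.length =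
      3 * (Fintype.card V - c.length) := by
  have hsum := G.sum_degree_eq_two_mul_card_edgeFinset_induce_add {v | v ∉ c.support}
  simp only [toFinset_setOf_notMem_support, hG.degree_eq, Set.mem_ofPred_eq, not_not, sum_const,
    smul_eq_mul] at hsum
  rw [hc.sum_card_neighborFinset_filter_mem_support hG hmin, card_compl,
    hc.card_support_toFinset] at hsum
  omega

end Walk

end Finite

end SimpleGraph

theorem cut_around_shortest_cycle_is_cycleSeparating_general
    {V : Type*} [Fintype V] [DecidableEq V]
    (G : SimpleGraph V) [DecidableRel G.Adj]
    (hcubic : ∀ v : V, G.degree v = 3)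
    (hK4 : ¬ Nonempty (G ≃g (⊤ : SimpleGraph (Fin 4))))
    (hK33 : ¬ Nonempty (G ≃g completeBipartiteGraph (Fin 3) (Fin 3)))
    (u : V) (w : G.Walk u u) (hcyc : w.IsCycle)
    (hshort : (w.length : ℕ∞) = G.girth) :
    ∃ (x : {v : V // v ∉ w.support})
      (p : (G.induce {v : V | v ∉ w.support}).Walk x x), p.IsCycle := by
  have hmin : w.length ≤ G.girth := by exact_mod_cast hshort.le
  have hedges := hcyc.two_mul_card_edgeFinset_induce_add_length hcubic hmin
  have hbound := hcyc.two_mul_length_le_card_add_one hcubic hK4 hK33 hmin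
  have hcard : Fintype.card {v | v ∉ w.support} = Fintype.card V - w.length := by
    rw [← Set.toFinset_card, w.toFinset_setOf_notMem_support, card_compl,
      hcyc.card_support_toFinset]
  have : Nonempty {v | v ∉ w.support} :=
    Fintype.card_pos_iff.mp (by have := hcyc.three_le_length; omega)
  by_contra hno
  have hacyc : (G.induce {v | v ∉ w.support}).IsAcyclic := fun x p hp => hno ⟨x, p, hp⟩
  have := hacyc.card_edgeFinset_lt
  omega

/-- Let `G` be a connected cubic graph other than `K₄` and `K_{3,3}` (the theta graph,
having parallel edges, is not a simple graph), and let `C` be a shortest circuit of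
`G`.  Then the set of edges with exactly one end on `C` is a cycle-separating edge cut:
after its removal both sides contain circuits — `C` itself is a circuit on one side,
and, as stated here, `G − V(C)` contains a circuit. -/
theorem cut_around_shortest_cycle_is_cycleSeparating
    {V : Type*} [Fintype V] [DecidableEq V]
    (G : SimpleGraph V) [DecidableRel G.Adj]
    (hconn : G.Connected)
    (hcubic : ∀ v : V, G.degree v = 3)
    (hK4 : ¬ Nonempty (G ≃g (⊤ : SimpleGraph (Fin 4))))
    (hK33 : ¬ Nonempty (G ≃g completeBipartiteGraph (Fin 3) (Fin 3)))
    (u : V) (w : G.Walk u u) (hcyc : w.IsCycle)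
    (hshort : (w.length : ℕ∞) = G.girth) :
    ∃ (x : {v : V // v ∉ w.support})
      (p : (G.induce {v : V | v ∉ w.support}).Walk x x), p.IsCycle :=
  cut_around_shortest_cycle_is_cycleSeparating_general G hcubic hK4 hK33 u w hcyc hshort
end
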